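/- arXiv:2406.17096 — 10 statements merged into one kernel-verified Lean document; each statement's English description precedes it below -/
import Mathlib

section
/- Strong duality for the total-variation uncertainty set (functional form): Let S be a finite nonempty set, p a pmf on S, v : S → ℝ any function, and σ ∈ [0,1]. Then inf{ E_q[v] : q a pmf on S with (1/2)·∑_{s∈S}|q(s) − p(s)| ≤ σ } = sup{ E_p[v − u] − σ·( max_{s∈S}(v(s) − u(s)) − min_{s∈S}(v(s) − u(s)) ) : u : S → ℝ with u(s) ≥ 0 for all s ∈ S }. -/
open Finset

/-- `p` is a probability mass function on the finite nonempty type `S`. -/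
def IsPmf {S : Type*} [Fintype S] (p : S → ℝ) : Prop :=
  (∀ s, 0 ≤ p s) ∧ ∑ s, p s = 1

/-- Weak duality helper. -/
lemma tv_weak_duality {S : Type*} [Fintype S] [Nonempty S]
    (p q : S → ℝ) (hp : IsPmf p) (hq : IsPmf q)
    (v u : S → ℝ) (hu : ∀ s, 0 ≤ u s) (σ : ℝ)
    (hTV : (1 / 2) * (∑ s, |q s - p s|) ≤ σ) :
    (∑ s, p s * (v s - u s)) - σ * ((⨆ s, (v s - u s)) - ⨅ s, (v s - u s))
      ≤ ∑ s, q s * v s := by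
  obtain ⟨w, hw'⟩ : ∃ w : S → ℝ, ∀ s, v s - u s = w s := ⟨_, fun _ => rfl⟩
  simp only [hw']
  have hbddA : BddAbove (Set.range w) := Set.Finite.bddAbove (Set.finite_range w)
  have hbddB : BddBelow (Set.range w) := Set.Finite.bddBelow (Set.finite_range w)
  obtain ⟨M, hM⟩ : ∃ M, M = ⨆ s, w s := ⟨_, rfl⟩
  obtain ⟨m, hm⟩ : ∃ m, m = ⨅ s, w s := ⟨_, rfl⟩
  rw [← hM, ← hm]
  have hwM : ∀ s, w s ≤ M := fun s => hM ▸ le_ciSup hbddA s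
  have hmw : ∀ s, m ≤ w s := fun s => hm ▸ ciInf_le hbddB s
  have hmM : m ≤ M := le_trans (hmw (Classical.arbitrary S)) (hwM _)
  have h1 : ∑ s, q s * w s ≤ ∑ s, q s * v s := by
    apply Finset.sum_le_sum; intro s _
    have h2 := hu s; have h3 := hq.1 s
    have : w s ≤ v s := by rw [← hw' s]; linarith
    nlinarith
  have key : ∑ s, p s * w s - ∑ s, q s * w s ≤ σ * (M - m) := by
    have e : ∑ s, p s * w s - ∑ s, q s * w s
        = ∑ s, (p s - q s) * (w s - (M + m) / 2) := by
      simp only [sub_mul, mul_sub, Finset.sum_sub_distrib]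
      rw [← Finset.sum_mul, ← Finset.sum_mul, hp.2, hq.2]; ring
    rw [e]
    have h2σ : ∑ s, |q s - p s| ≤ 2 * σ := by linarith
    calc ∑ s, (p s - q s) * (w s - (M + m) / 2)
        ≤ ∑ s, |q s - p s| * ((M - m) / 2) := by
          apply Finset.sum_le_sum; intro s _
          have habs : (p s - q s) * (w s - (M + m) / 2)
              ≤ |p s - q s| * |w s - (M + m) / 2| := by
            calc (p s - q s) * (w s - (M + m) / 2)
                ≤ |(p s - q s) * (w s - (M + m) / 2)| := le_abs_self _
              _ = |p s - q s| * |w s - (M + m) / 2| := abs_mul _ _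
          have h2 : |w s - (M + m) / 2| ≤ (M - m) / 2 := by
            rw [abs_le]; have := hwM s; have := hmw s
            constructor <;> linarith
          have h3 : |p s - q s| = |q s - p s| := abs_sub_comm _ _
          calc (p s - q s) * (w s - (M + m) / 2)
              ≤ |p s - q s| * |w s - (M + m) / 2| := habs
            _ ≤ |p s - q s| * ((M - m) / 2) :=
              mul_le_mul_of_nonneg_left h2 (abs_nonneg _)
            _ = |q s - p s| * ((M - m) / 2) := by rw [h3]
      _ = (∑ s, |q s - p s|) * ((M - m) / 2) := (Finset.sum_mul _ _ _).symm
      _ ≤ σ * (M - m) := by nlinarith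
  linarith

/-- Strong duality for the total-variation uncertainty set (functional form). -/
theorem tv_strong_duality_functional
    {S : Type*} [Fintype S] [Nonempty S]
    (p : S → ℝ) (hp : IsPmf p)
    (v : S → ℝ) (σ : ℝ) (hσ0 : 0 ≤ σ) (hσ1 : σ ≤ 1) :
    sInf {x : ℝ | ∃ q : S → ℝ, IsPmf q ∧
        (1 / 2) * (∑ s, |q s - p s|) ≤ σ ∧ x = ∑ s, q s * v s}
      =
    sSup {x : ℝ | ∃ u : S → ℝ, (∀ s, 0 ≤ u s) ∧
        x = (∑ s, p s * (v s - u s))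
          - σ * ((⨆ s, (v s - u s)) - ⨅ s, (v s - u s))} := by
  classical
  -- minimizer of v
  obtain ⟨s₀, hs₀⟩ := Finite.exists_min v
  -- the set of values of v
  have hvals : (Finset.image v Finset.univ).Nonempty :=
    ⟨v s₀, Finset.mem_image_of_mem v (Finset.mem_univ s₀)⟩
  set vals := Finset.image v Finset.univ with hvalsdef
  -- candidate thresholds
  set T := vals.filter (fun c => ∑ s ∈ Finset.univ.filter (fun s => c < v s), p s ≤ σ)
    with hTdef
  have hT : T.Nonempty := by
    refine ⟨vals.max' hvals, Finset.mem_filter.2 ⟨vals.max'_mem hvals, ?_⟩⟩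
    have : Finset.univ.filter (fun s => vals.max' hvals < v s) = ∅ := by
      apply Finset.filter_eq_empty_iff.2
      intro s _
      exact not_lt.2 (vals.le_max' (v s) (Finset.mem_image_of_mem v (Finset.mem_univ s)))
    rw [this]; simpa using hσ0
  obtain ⟨t, htmem⟩ : ∃ t, t = T.min' hT := ⟨_, rfl⟩
  have htT : t ∈ T := htmem ▸ T.min'_mem hT
  have htvals : t ∈ vals := (Finset.mem_filter.1 htT).1
  obtain ⟨s₁, _, hs₁⟩ := Finset.mem_image.1 htvals
  have hmt : v s₀ ≤ t := hs₁ ▸ hs₀ s₁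
  -- the three level sets
  set A := Finset.univ.filter (fun s => t < v s) with hA
  set B := Finset.univ.filter (fun s => v s = t) with hB
  set C := Finset.univ.filter (fun s => v s < t) with hC
  obtain ⟨a, hadef⟩ : ∃ a, a = ∑ s ∈ A, p s := ⟨_, rfl⟩
  obtain ⟨b, hbdef⟩ : ∃ b, b = ∑ s ∈ B, p s := ⟨_, rfl⟩
  have ha0 : 0 ≤ a := hadef ▸ Finset.sum_nonneg (fun s _ => hp.1 s)
  have hb0 : 0 ≤ b := hbdef ▸ Finset.sum_nonneg (fun s _ => hp.1 s)
  have haσ : a ≤ σ := hadef ▸ (Finset.mem_filter.1 htT).2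
  -- splitting sums over A, B, C
  have hsplit : ∀ f : S → ℝ, ∑ s, f s = ∑ s ∈ A, f s + ∑ s ∈ B, f s + ∑ s ∈ C, f s := by
    intro f
    have h1 := Finset.sum_filter_add_sum_filter_not Finset.univ (fun s => t < v s) f
    have h2 := Finset.sum_filter_add_sum_filter_not
      (Finset.univ.filter (fun s => ¬ t < v s)) (fun s => v s = t) f
    have e1 : (Finset.univ.filter (fun s => ¬ t < v s)).filter (fun s => v s = t) = B := by
      ext s
      simp only [hB, Finset.mem_filter, Finset.mem_univ, true_and]
      constructor
      · exact fun h => h.2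
      · intro h; exact ⟨by rw [h]; exact lt_irrefl t, h⟩
    have e2 : (Finset.univ.filter (fun s => ¬ t < v s)).filter (fun s => ¬ v s = t) = C := by
      ext s
      simp only [hC, Finset.mem_filter, Finset.mem_univ, true_and]
      constructor
      · rintro ⟨h1', h2'⟩; exact lt_of_le_of_ne (not_lt.1 h1') h2'
      · intro h; exact ⟨not_lt.2 h.le, ne_of_lt h⟩
    rw [e1, e2] at h2
    rw [← h1, ← h2]; ring
  have hpsum : a + b + ∑ s ∈ C, p s = 1 := by
    rw [hadef, hbdef]
    rw [← hsplit p]; exact hp.2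
  -- quantile property: σ ≤ a + b
  have hab : σ ≤ a + b := by
    by_contra h
    push_neg at h
    have hDab : ∑ s ∈ Finset.univ.filter (fun s => t ≤ v s), p s = a + b := by
      rw [hadef, hbdef]
      rw [← Finset.sum_union (by
        simp only [Finset.disjoint_left, hA, hB, Finset.mem_filter, Finset.mem_univ, true_and]
        intro s hs hs'; rw [hs'] at hs; exact lt_irrefl t hs)]
      apply Finset.sum_congr _ (fun _ _ => rfl)
      ext s
      simp only [Finset.mem_union, hA, hB, Finset.mem_filter, Finset.mem_univ, true_and]
      constructor
      · intro hs
        rcases lt_or_eq_of_le hs with h' | h'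
        · exact Or.inl h'
        · exact Or.inr h'.symm
      · rintro (h' | h')
        · exact h'.le
        · exact h'.ge
    have hDlt : ∑ s ∈ Finset.univ.filter (fun s => t ≤ v s), p s < σ := by
      rw [hDab]; exact h
    rcases (vals.filter (fun c => c < t)).eq_empty_or_nonempty with hLe | hLn
    · have hDu : Finset.univ.filter (fun s => t ≤ v s) = Finset.univ := by
        ext s
        simp only [Finset.mem_filter, Finset.mem_univ, true_and, iff_true]
        by_contra hlt
        push_neg at hlt
        have : v s ∈ vals.filter (fun c => c < t) :=
          Finset.mem_filter.2 ⟨Finset.mem_image_of_mem v (Finset.mem_univ s), hlt⟩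
        rw [hLe] at this
        exact absurd this (Finset.notMem_empty _)
      rw [hDu, hp.2] at hDlt; linarith
    · set t' := (vals.filter (fun c => c < t)).max' hLn with ht'
      have ht'mem := (vals.filter (fun c => c < t)).max'_mem hLn
      have ht'v : t' ∈ vals := (Finset.mem_filter.1 ht'mem).1
      have ht'lt : t' < t := (Finset.mem_filter.1 ht'mem).2
      have hset : Finset.univ.filter (fun s => t' < v s)
          = Finset.univ.filter (fun s => t ≤ v s) := by
        ext s
        simp only [Finset.mem_filter, Finset.mem_univ, true_and]
        constructor
        · intro hs
          by_contra hlt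
          push_neg at hlt
          have hmemL : v s ∈ vals.filter (fun c => c < t) :=
            Finset.mem_filter.2 ⟨Finset.mem_image_of_mem v (Finset.mem_univ s), hlt⟩
          exact absurd ((vals.filter (fun c => c < t)).le_max' _ hmemL) (not_le.2 hs)
        · intro hs; linarith
      have ht'T : t' ∈ T := by
        refine Finset.mem_filter.2 ⟨ht'v, ?_⟩
        rw [hset]; exact hDlt.le
      have := T.min'_le _ ht'T
      rw [← htmem] at this
      linarith
  -- the transfer ratio
  obtain ⟨r, hrdef⟩ : ∃ r : ℝ, r = if b = 0 then 0 else (σ - a) / b := ⟨_, rfl⟩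
  have hrb : r * b = σ - a := by
    rcases eq_or_ne b 0 with hb | hb
    · rw [hrdef, if_pos hb, hb]
      have : σ = a := le_antisymm (by linarith) haσ
      rw [this]; ring
    · rw [hrdef, if_neg hb]
      field_simp
  have hr0 : 0 ≤ r := by
    rcases eq_or_ne b 0 with hb | hb
    · rw [hrdef, if_pos hb]
    · rw [hrdef, if_neg hb]
      apply div_nonneg (by linarith)
      exact hb0
  have hr1 : r ≤ 1 := by
    rcases eq_or_ne b 0 with hb | hb
    · rw [hrdef, if_pos hb]; norm_num
    · rw [hrdef, if_neg hb]
      rw [div_le_one (lt_of_le_of_ne hb0 (Ne.symm hb))]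
      linarith
  -- the optimal primal q
  obtain ⟨base, hbase⟩ : ∃ base : S → ℝ,
      base = fun s => if t < v s then 0 else (if v s = t then p s * (1 - r) else p s) :=
    ⟨_, rfl⟩
  obtain ⟨q, hqdef⟩ : ∃ q : S → ℝ,
      q = fun s => base s + (if s = s₀ then σ else 0) := ⟨_, rfl⟩
  have hbaseA : ∀ s ∈ A, base s = 0 := by
    intro s hs
    have h1 := (Finset.mem_filter.1 hs).2
    rw [hbase]
    dsimp only
    rw [if_pos h1]
  have hbaseB : ∀ s ∈ B, base s = p s * (1 - r) := by
    intro s hs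
    have h1 := (Finset.mem_filter.1 hs).2
    rw [hbase]
    dsimp only
    rw [if_neg (by rw [h1]; exact lt_irrefl t), if_pos h1]
  have hbaseC : ∀ s ∈ C, base s = p s := by
    intro s hs
    have h1 := (Finset.mem_filter.1 hs).2
    rw [hbase]
    dsimp only
    rw [if_neg (not_lt.2 h1.le), if_neg (ne_of_lt h1)]
  have hbase0 : ∀ s, 0 ≤ base s := by
    intro s
    rw [hbase]
    dsimp only
    split_ifs with h1 h2
    · exact le_refl 0
    · exact mul_nonneg (hp.1 s) (by linarith)
    · exact hp.1 s
  have hbasele : ∀ s, base s ≤ p s := by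
    intro s
    rw [hbase]
    dsimp only
    split_ifs with h1 h2
    · exact hp.1 s
    · nlinarith [hp.1 s]
    · exact le_refl _
  -- q is a pmf
  have hq1 : ∀ s, 0 ≤ q s := by
    intro s
    rw [hqdef]
    dsimp only
    have := hbase0 s
    split_ifs <;> linarith
  have hqsum : ∑ s, q s = 1 := by
    rw [hqdef]
    dsimp only
    rw [Finset.sum_add_distrib]
    have h1 : ∑ s, (if s = s₀ then σ else 0) = σ := by
      simp [Finset.sum_ite_eq']
    have h2 : ∑ s, base s = 1 - σ := by
      rw [hsplit base]
      rw [Finset.sum_congr rfl hbaseA, Finset.sum_congr rfl hbaseB,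
        Finset.sum_congr rfl hbaseC]
      have : ∑ s ∈ B, p s * (1 - r) = b * (1 - r) := by
        rw [hbdef, Finset.sum_mul]
      rw [this]
      simp only [Finset.sum_const_zero]
      nlinarith [hpsum, hrb]
    rw [h1, h2]; ring
  have hqpmf : IsPmf q := ⟨hq1, hqsum⟩
  -- TV bound
  have hTV : (1 / 2) * (∑ s, |q s - p s|) ≤ σ := by
    have hterm : ∀ s, |q s - p s| ≤ |base s - p s| + (if s = s₀ then σ else 0) := by
      intro s
      rw [hqdef]
      dsimp only
      have : base s + (if s = s₀ then σ else 0) - p s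
          = (base s - p s) + (if s = s₀ then σ else 0) := by ring
      rw [this]
      refine le_trans (abs_add_le _ _) ?_
      gcongr
      split_ifs
      · rw [abs_of_nonneg hσ0]
      · simp
    have hsum1 : ∑ s, |base s - p s| = σ := by
      rw [hsplit (fun s => |base s - p s|)]
      have eA : ∀ s ∈ A, |base s - p s| = p s := by
        intro s hs
        rw [hbaseA s hs]
        rw [abs_of_nonpos (by linarith [hp.1 s])]
        ring
      have eB : ∀ s ∈ B, |base s - p s| = r * p s := by
        intro s hs
        rw [hbaseB s hs]
        have : p s * (1 - r) - p s = -(r * p s) := by ring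
        rw [this, abs_neg, abs_of_nonneg (mul_nonneg hr0 (hp.1 s))]
      have eC : ∀ s ∈ C, |base s - p s| = 0 := by
        intro s hs
        rw [hbaseC s hs]
        simp
      rw [Finset.sum_congr rfl eA, Finset.sum_congr rfl eB, Finset.sum_congr rfl eC]
      rw [← Finset.mul_sum, ← hbdef, ← hadef]
      simp only [Finset.sum_const_zero]
      linarith [hrb]
    have : ∑ s, |q s - p s| ≤ σ + σ := by
      calc ∑ s, |q s - p s|
          ≤ ∑ s, (|base s - p s| + (if s = s₀ then σ else 0)) :=
            Finset.sum_le_sum (fun s _ => hterm s)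
        _ = σ + σ := by
            rw [Finset.sum_add_distrib, hsum1]
            simp [Finset.sum_ite_eq']
    linarith
  -- value of the primal solution
  obtain ⟨V, hVdef⟩ : ∃ V, V = ∑ s, q s * v s := ⟨_, rfl⟩
  have hVval : V = b * ((1 - r) * t) + (∑ s ∈ C, p s * v s) + σ * v s₀ := by
    rw [hVdef, hqdef]
    dsimp only
    have : ∀ s : S, (base s + (if s = s₀ then σ else 0)) * v s
        = base s * v s + (if s = s₀ then σ * v s else 0) := by
      intro s; split_ifs <;> ring
    rw [Finset.sum_congr rfl (fun s _ => this s), Finset.sum_add_distrib]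
    have h1 : ∑ s, (if s = s₀ then σ * v s else 0) = σ * v s₀ := by
      simp [Finset.sum_ite_eq']
    rw [h1]
    congr 1
    rw [hsplit (fun s => base s * v s)]
    have eA : ∀ s ∈ A, base s * v s = 0 := by
      intro s hs; rw [hbaseA s hs]; ring
    have eB : ∀ s ∈ B, base s * v s = p s * ((1 - r) * t) := by
      intro s hs
      rw [hbaseB s hs, (Finset.mem_filter.1 hs).2]
      ring
    have eC : ∀ s ∈ C, base s * v s = p s * v s := by
      intro s hs; rw [hbaseC s hs]
    rw [Finset.sum_congr rfl eA, Finset.sum_congr rfl eB, Finset.sum_congr rfl eC]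
    rw [← Finset.sum_mul, ← hbdef]
    simp only [Finset.sum_const_zero]
    ring
  -- the optimal dual u
  obtain ⟨u, hudef⟩ : ∃ u : S → ℝ, u = fun s => max (v s - t) 0 := ⟨_, rfl⟩
  have hu0 : ∀ s, 0 ≤ u s := by
    intro s; rw [hudef]; exact le_max_right _ _
  have hw : ∀ s, v s - u s = min (v s) t := by
    intro s
    rw [hudef]
    dsimp only
    rcases le_total (v s) t with h | h
    · rw [max_eq_right (by linarith), min_eq_left h]; ring
    · rw [max_eq_left (by linarith), min_eq_right h]; ring
  have hbddA' : BddAbove (Set.range (fun s => min (v s) t)) :=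
    Set.Finite.bddAbove (Set.finite_range _)
  have hbddB' : BddBelow (Set.range (fun s => min (v s) t)) :=
    Set.Finite.bddBelow (Set.finite_range _)
  have hsup : (⨆ s, min (v s) t) = t := by
    apply le_antisymm
    · exact ciSup_le (fun s => min_le_right _ _)
    · have := le_ciSup hbddA' s₁
      rw [hs₁, min_self] at this
      exact this
  have hinf : (⨅ s, min (v s) t) = v s₀ := by
    apply le_antisymm
    · have := ciInf_le hbddB' s₀
      rw [min_eq_left hmt] at this
      exact this
    · exact le_ciInf (fun s => le_min (hs₀ s) hmt)
  -- dual value equals V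
  have hdual : V = (∑ s, p s * (v s - u s))
      - σ * ((⨆ s, (v s - u s)) - ⨅ s, (v s - u s)) := by
    simp only [hw]
    rw [hsup, hinf]
    have hsumw : ∑ s, p s * min (v s) t = a * t + b * t + ∑ s ∈ C, p s * v s := by
      rw [hsplit (fun s => p s * min (v s) t)]
      have eA : ∀ s ∈ A, p s * min (v s) t = p s * t := by
        intro s hs
        rw [min_eq_right (le_of_lt (Finset.mem_filter.1 hs).2)]
      have eB : ∀ s ∈ B, p s * min (v s) t = p s * t := by
        intro s hs
        rw [(Finset.mem_filter.1 hs).2, min_self]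
      have eC : ∀ s ∈ C, p s * min (v s) t = p s * v s := by
        intro s hs
        rw [min_eq_left (le_of_lt (Finset.mem_filter.1 hs).2)]
      rw [Finset.sum_congr rfl eA, Finset.sum_congr rfl eB, Finset.sum_congr rfl eC]
      rw [← Finset.sum_mul, ← Finset.sum_mul, ← hadef, ← hbdef]
    rw [hsumw, hVval]
    linear_combination (-t) * hrb
  -- weak duality and conclusion
  apply le_antisymm
  · -- sInf ≤ V ≤ sSup
    have hVmem1 : V ∈ {x : ℝ | ∃ q : S → ℝ, IsPmf q ∧
        (1 / 2) * (∑ s, |q s - p s|) ≤ σ ∧ x = ∑ s, q s * v s} :=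
      ⟨q, hqpmf, hTV, hVdef⟩
    have hVmem2 : V ∈ {x : ℝ | ∃ u : S → ℝ, (∀ s, 0 ≤ u s) ∧
        x = (∑ s, p s * (v s - u s))
          - σ * ((⨆ s, (v s - u s)) - ⨅ s, (v s - u s))} :=
      ⟨u, hu0, hdual⟩
    have hbdd : BddBelow {x : ℝ | ∃ q : S → ℝ, IsPmf q ∧
        (1 / 2) * (∑ s, |q s - p s|) ≤ σ ∧ x = ∑ s, q s * v s} := by
      refine ⟨(∑ s, p s * (v s - (fun _ => (0:ℝ)) s))
        - σ * ((⨆ s, (v s - (fun _ => (0:ℝ)) s)) - ⨅ s, (v s - (fun _ => (0:ℝ)) s)), ?_⟩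
      rintro x ⟨q', hq', hTV', rfl⟩
      exact tv_weak_duality p q' hp hq' v (fun _ => 0) (fun _ => le_refl 0) σ hTV'
    have hbdd2 : BddAbove {x : ℝ | ∃ u : S → ℝ, (∀ s, 0 ≤ u s) ∧
        x = (∑ s, p s * (v s - u s))
          - σ * ((⨆ s, (v s - u s)) - ⨅ s, (v s - u s))} := by
      refine ⟨∑ s, p s * v s, ?_⟩
      rintro x ⟨u', hu', rfl⟩
      have hTVp : (1 / 2) * (∑ s, |p s - p s|) ≤ σ := by
        simp [hσ0]
      exact tv_weak_duality p p hp hp v u' hu' σ hTVp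
    calc sInf _ ≤ V := csInf_le hbdd hVmem1
      _ ≤ sSup _ := le_csSup hbdd2 hVmem2
  · -- sSup ≤ sInf by weak duality
    apply csSup_le
    · exact ⟨_, (fun _ => (0:ℝ)), fun _ => le_refl 0, rfl⟩
    · rintro x ⟨u', hu', rfl⟩
      apply le_csInf
      · exact ⟨_, p, hp, by simp [hσ0], rfl⟩
      · rintro y ⟨q', hq', hTV', rfl⟩
        exact tv_weak_duality p q' hp hq' v u' hu' σ hTV'
end

section
/- Strong duality for the total-variation uncertainty set (truncation form): Let S be a finite nonempty set, p a pmf on S, v : S → ℝ with v(s) ≥ 0 for all s, and σ ∈ [0,1]. Then inf{ E_q[v] : q a pmf on S with (1/2)·∑_{s∈S}|q(s) − p(s)| ≤ σ } = sup_{α ≥ 0} { E_p[(v)_α] − σ·( α − min_{s∈S} v(s) ) }. -/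
open Finset

/-!
Weak duality: with `m = min v` and `m ≤ α`, the truncation `min v α` takes values in `[m, α]`,
and moving total variation `σ` of mass changes the mean of such a function by at most
`σ (α - m)`.
Strong duality: let `α` be a value of `v` at which the upper tail of `p` crosses level `σ`.
Removing all the mass of `p` above `α` and a common fraction of the mass at `α`, `σ` in total,
and placing it on a minimiser of `v` gives a distribution whose mean equals the dual objective
at `α`.
-/

section Duality

variable {S : Type*} [Fintype S]

theorem IsPmf.sum_mul_const {p : S → ℝ} (hp : IsPmf p) (c : ℝ) : ∑ s, p s * c = c := by
  rw [← sum_mul, hp.2, one_mul]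

theorem le_sum_mul_of_le {q v : S → ℝ} (hq : IsPmf q) {m : ℝ} (hm : ∀ s, m ≤ v s) :
    m ≤ ∑ s, q s * v s :=
  hq.sum_mul_const m ▸ sum_le_sum fun s _ => mul_le_mul_of_nonneg_left (hm s) (hq.1 s)

theorem sum_mul_sub_sum_mul_le {p q f : S → ℝ} (hpq : ∑ s, p s = ∑ s, q s) {a b : ℝ}
    (hf : ∀ s, f s ∈ Set.Icc a b) :
    ∑ s, p s * f s - ∑ s, q s * f s ≤ (1 / 2) * (∑ s, |q s - p s|) * (b - a) := by
  set c := (a + b) / 2 with hc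
  have hcenter : ∑ s, (p s - q s) * c = 0 := by
    rw [← sum_mul, sum_sub_distrib, hpq, sub_self, zero_mul]
  have hdev : ∀ s, |f s - c| ≤ (b - a) / 2 := fun s =>
    abs_le.2 ⟨by rw [hc]; linarith [(hf s).1], by rw [hc]; linarith [(hf s).2]⟩
  calc ∑ s, p s * f s - ∑ s, q s * f s
        = ∑ s, (p s - q s) * (f s - c) + ∑ s, (p s - q s) * c := by
          rw [← sum_add_distrib, ← sum_sub_distrib]
          exact sum_congr rfl fun s _ => by ring
    _ ≤ ∑ s, |q s - p s| * ((b - a) / 2) := by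
        rw [hcenter, add_zero]
        refine sum_le_sum fun s _ => (le_abs_self _).trans ?_
        rw [abs_mul, abs_sub_comm]
        exact mul_le_mul_of_nonneg_left (hdev s) (abs_nonneg _)
    _ = _ := by rw [← sum_mul]; ring

theorem dual_le_primal {p q v : S → ℝ} (hp : IsPmf p) (hq : IsPmf q) {m σ : ℝ}
    (hm : ∀ s, m ≤ v s) (hσ1 : σ ≤ 1) (htv : (1 / 2) * (∑ s, |q s - p s|) ≤ σ) (α : ℝ) :
    ∑ s, p s * min (v s) α - σ * (α - m) ≤ ∑ s, q s * v s := by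
  have hqv := le_sum_mul_of_le hq hm
  rcases le_total α m with hαm | hmα
  · have hmin : ∀ s, min (v s) α = α := fun s => min_eq_right (hαm.trans (hm s))
    simp only [hmin, hp.sum_mul_const]
    linarith [mul_nonneg (sub_nonneg.2 hσ1) (sub_nonneg.2 hαm)]
  · have hshift := sum_mul_sub_sum_mul_le (hp.2.trans hq.2.symm)
      (f := fun s => min (v s) α) fun s => ⟨le_min (hm s) hmα, min_le_right _ _⟩
    have htrunc : ∑ s, q s * min (v s) α ≤ ∑ s, q s * v s :=
      sum_le_sum fun s _ => mul_le_mul_of_nonneg_left (min_le_left _ _) (hq.1 s)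
    linarith [mul_le_mul_of_nonneg_right htv (sub_nonneg.2 hmα)]

theorem exists_mass_gt_le_le_mass_ge [Nonempty S] {p : S → ℝ} (hp : IsPmf p) (v : S → ℝ)
    {σ : ℝ} (hσ0 : 0 ≤ σ) (hσ1 : σ ≤ 1) :
    ∃ t, ∑ s with v t < v s, p s ≤ σ ∧ σ ≤ ∑ s with v t ≤ v s, p s := by
  classical
  set T := univ.filter fun t => ∑ s with v t < v s, p s ≤ σ
  have hT : T.Nonempty := by
    obtain ⟨t, ht⟩ := Finite.exists_max v
    refine ⟨t, mem_filter.2 ⟨mem_univ _, ?_⟩⟩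
    rwa [filter_false_of_mem fun s _ => not_lt.2 (ht s), sum_empty]
  obtain ⟨t, htT, htmin⟩ := T.exists_min_image v hT
  refine ⟨t, (mem_filter.1 htT).2, ?_⟩
  by_contra! hlt
  by_cases hbelow : ∃ s, v s < v t
  · -- the largest value below `v t` would also lie in `T`
    obtain ⟨s₁, hs₁⟩ := hbelow
    obtain ⟨s₂, hs₂, hs₂max⟩ := (univ.filter fun s => v s < v t).exists_max_image v
      ⟨s₁, mem_filter.2 ⟨mem_univ _, hs₁⟩⟩
    have hs₂lt : v s₂ < v t := (mem_filter.1 hs₂).2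
    have htail : (univ.filter fun s => v s₂ < v s) = univ.filter fun s => v t ≤ v s := by
      ext s
      simp only [mem_filter, mem_univ, true_and]
      refine ⟨fun h => not_lt.1 fun hst => ?_, fun h => hs₂lt.trans_le h⟩
      exact (hs₂max s (mem_filter.2 ⟨mem_univ _, hst⟩)).not_gt h
    have hs₂T : s₂ ∈ T := mem_filter.2 ⟨mem_univ _, by rw [htail]; exact hlt.le⟩
    exact (htmin s₂ hs₂T).not_gt hs₂lt
  · push Not at hbelow
    rw [filter_true_of_mem fun s _ => hbelow s, hp.2] at hlt
    linarith

theorem exists_weight_mul_sub_eq_sub_min (p v : S → ℝ) {α σ : ℝ}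
    (hgt : ∑ s with α < v s, p s ≤ σ) (hge : σ ≤ ∑ s with α ≤ v s, p s) :
    ∃ w : S → ℝ, (∀ s, w s ∈ Set.Icc 0 1) ∧ (∀ s, w s * (v s - α) = v s - min (v s) α) ∧
      ∑ s, p s * w s = σ := by
  classical
  set W : ℝ → S → ℝ := fun c s => if v s < α then 0 else if α < v s then 1 else c
  have hcont : Continuous fun c => ∑ s, p s * W c s := by
    refine continuous_finsetSum _ fun s _ => continuous_const.mul ?_
    exact continuous_if_const _ (fun _ => continuous_const)
      fun _ => continuous_if_const _ (fun _ => continuous_const) fun _ => continuous_id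
  have hW0 : ∑ s, p s * W 0 s = ∑ s with α < v s, p s := by
    rw [sum_filter]
    refine sum_congr rfl fun s _ => ?_
    simp only [W]; split_ifs <;> first | (exfalso; linarith) | simp
  have hW1 : ∑ s, p s * W 1 s = ∑ s with α ≤ v s, p s := by
    rw [sum_filter]
    refine sum_congr rfl fun s _ => ?_
    simp only [W]; split_ifs <;> first | (exfalso; linarith) | simp
  obtain ⟨c, hc, hcσ⟩ := intermediate_value_Icc zero_le_one hcont.continuousOn
    ⟨hW0 ▸ hgt, hW1 ▸ hge⟩
  refine ⟨W c, fun s => ?_, fun s => ?_, hcσ⟩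
  · simp only [W]; split_ifs <;> simp [hc.1, hc.2]
  · simp only [W]
    split_ifs with h₁ h₂
    · rw [min_eq_left h₁.le]; ring
    · rw [min_eq_right h₂.le]; ring
    · rw [le_antisymm (not_lt.1 h₂) (not_lt.1 h₁), min_self]; ring

def moveMass [DecidableEq S] (p w : S → ℝ) (σ : ℝ) (s₀ : S) (s : S) : ℝ :=
  p s * (1 - w s) + if s = s₀ then σ else 0

variable [DecidableEq S] {p w : S → ℝ} {σ : ℝ}

theorem isPmf_moveMass (hp : IsPmf p) (hw : ∀ s, w s ∈ Set.Icc 0 1) (hpw : ∑ s, p s * w s = σ)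
    (hσ0 : 0 ≤ σ) (s₀ : S) : IsPmf (moveMass p w σ s₀) := by
  refine ⟨fun s => add_nonneg (mul_nonneg (hp.1 s) (by linarith [(hw s).2])) ?_, ?_⟩
  · split_ifs <;> simp [hσ0]
  · simp only [moveMass, sum_add_distrib, mul_sub, mul_one, sum_sub_distrib, hp.2, hpw,
      sum_ite_eq', mem_univ, if_true]
    ring

theorem tv_moveMass_le (hp : IsPmf p) (hw : ∀ s, w s ∈ Set.Icc 0 1)
    (hpw : ∑ s, p s * w s = σ) (hσ0 : 0 ≤ σ) (s₀ : S) :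
    (1 / 2) * (∑ s, |moveMass p w σ s₀ s - p s|) ≤ σ := by
  have hpoint : ∀ s, |moveMass p w σ s₀ s - p s| ≤ p s * w s + if s = s₀ then σ else 0 := by
    intro s
    have hsplit : moveMass p w σ s₀ s - p s = -(p s * w s) + if s = s₀ then σ else 0 := by
      simp only [moveMass]; ring
    rw [hsplit]
    refine (abs_add_le _ _).trans (add_le_add ?_ ?_)
    · rw [abs_neg, abs_of_nonneg (mul_nonneg (hp.1 s) (hw s).1)]
    · split_ifs <;> simp [abs_of_nonneg hσ0]
  have hsum := sum_le_sum fun s (_ : s ∈ univ) => hpoint s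
  rw [sum_add_distrib, hpw, sum_ite_eq', if_pos (mem_univ _)] at hsum
  linarith

theorem sum_moveMass_mul (v : S → ℝ) (s₀ : S) :
    ∑ s, moveMass p w σ s₀ s * v s = ∑ s, p s * v s - ∑ s, p s * w s * v s + σ * v s₀ := by
  simp only [moveMass, add_mul, ite_mul, zero_mul, sum_add_distrib, sum_ite_eq', mem_univ,
    if_true, mul_sub, mul_one, sub_mul, sum_sub_distrib]

end Duality

theorem csInf_eq_csSup_of_forall_le_of_mem {α : Type*} [ConditionallyCompleteLattice α]
    {A B : Set α} (hBA : ∀ a ∈ A, ∀ b ∈ B, b ≤ a) {z : α} (hzA : z ∈ A) (hzB : z ∈ B) :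
    sInf A = sSup B :=
  (IsLeast.csInf_eq ⟨hzA, fun a ha => hBA a ha z hzB⟩).trans
    (IsGreatest.csSup_eq ⟨hzB, fun b hb => hBA z hzA b hb⟩).symm

/-- Strong duality for the total-variation uncertainty set (truncation form). -/
theorem tv_strong_duality_truncation
    {S : Type*} [Fintype S] [Nonempty S]
    (p : S → ℝ) (hp : IsPmf p)
    (v : S → ℝ) (hv : ∀ s, 0 ≤ v s)
    (σ : ℝ) (hσ0 : 0 ≤ σ) (hσ1 : σ ≤ 1) :
    sInf {x : ℝ | ∃ q : S → ℝ, IsPmf q ∧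
        (1 / 2) * (∑ s, |q s - p s|) ≤ σ ∧ x = ∑ s, q s * v s}
      =
    sSup {x : ℝ | ∃ α : ℝ, 0 ≤ α ∧
        x = (∑ s, p s * min (v s) α) - σ * (α - ⨅ s, v s)} := by
  classical
  obtain ⟨s₀, hs₀⟩ : ∃ s₀, v s₀ = ⨅ s, v s := exists_eq_ciInf_of_finite
  have hm : ∀ s, (⨅ s, v s) ≤ v s := ciInf_le (Finite.bddBelow_range v)
  obtain ⟨t, hgt, hge⟩ := exists_mass_gt_le_le_mass_ge hp v hσ0 hσ1
  obtain ⟨w, hw, hwv, hpw⟩ := exists_weight_mul_sub_eq_sub_min p v hgt hge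
  refine csInf_eq_csSup_of_forall_le_of_mem ?_
    ⟨moveMass p w σ s₀, isPmf_moveMass hp hw hpw hσ0 s₀, tv_moveMass_le hp hw hpw hσ0 s₀, rfl⟩
    ⟨v t, hv t, ?_⟩
  · rintro _ ⟨q, hq, htv, rfl⟩ _ ⟨α, -, rfl⟩
    exact dual_le_primal hp hq hm hσ1 htv α
  · -- complementary slackness: `w (v - α) = v - min v α` and `∑ p w = σ`
    have hslack : ∑ s, p s * (v s - min (v s) (v t)) = ∑ s, p s * w s * v s - σ * v t := by
      simp only [← hwv, ← hpw, sum_mul, ← sum_sub_distrib]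
      exact sum_congr rfl fun s _ => by ring
    rw [sum_moveMass_mul, ← hs₀]
    simp only [mul_sub, sum_sub_distrib] at hslack
    linarith
end

section
/- Strong duality for the chi-square uncertainty set: Let S be a finite nonempty set, p a pmf on S, v : S → ℝ with v(s) ≥ 0 for all s, and σ ≥ 0. Then inf{ E_q[v] : q a pmf on S with q(s) = 0 whenever p(s) = 0 and ρ_{χ²}(q,p) ≤ σ } = sup_{α ≥ 0} { E_p[(v)_α] − sqrt( σ · Var_p[(v)_α] ) }. -/
open Finset

noncomputable section

variable {S : Type*}

def hinge (v : S → ℝ) (α : ℝ) : S → ℝ := fun s => max (α - v s) 0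

lemma hinge_of_forall_le {v : S → ℝ} {α : ℝ} (h : ∀ s, v s ≤ α) :
    hinge v α = fun s => α - v s :=
  funext fun s => max_eq_left (sub_nonneg.2 (h s))

variable [Fintype S]

def pmfMean (p f : S → ℝ) : ℝ := ∑ s, p s * f s

def pmfVar (p f : S → ℝ) : ℝ := pmfMean p (fun s => f s ^ 2) - pmfMean p f ^ 2

def chiSqDiv (p q : S → ℝ) : ℝ :=
  ∑ s ∈ univ.filter (fun s => 0 < p s), (q s - p s) ^ 2 / p s

def chiSqDual (p v : S → ℝ) (σ α : ℝ) : ℝ :=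
  pmfMean p (fun s => min (v s) α) - √(σ * pmfVar p (fun s => min (v s) α))

def primalValues (p v : S → ℝ) (σ : ℝ) : Set ℝ :=
  {x | ∃ q : S → ℝ, IsPmf q ∧ (∀ s, p s = 0 → q s = 0) ∧ chiSqDiv p q ≤ σ ∧ x = pmfMean q v}

def dualValues (p v : S → ℝ) (σ : ℝ) : Set ℝ :=
  {x | ∃ α : ℝ, 0 ≤ α ∧ x = chiSqDual p v σ α}

def tilted (p w : S → ℝ) : S → ℝ := fun s => p s * w s / pmfMean p w

variable {p q f g v w : S → ℝ} {σ α : ℝ}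

lemma sum_filter_pos_eq_sum (hp0 : ∀ s, 0 ≤ p s) (hf : ∀ s, f s ≠ 0 → p s ≠ 0) :
    ∑ s ∈ univ.filter (fun s => 0 < p s), f s = ∑ s, f s :=
  sum_filter_of_ne fun s _ hs => (hp0 s).lt_of_ne' (hf s hs)

lemma IsPmf.exists_pos (hp : IsPmf p) : ∃ s, 0 < p s := by
  obtain ⟨s, -, hs⟩ := exists_ne_zero_of_sum_ne_zero (hp.2 ▸ one_ne_zero : ∑ s, p s ≠ 0)
  exact ⟨s, (hp.1 s).lt_of_ne' hs⟩

lemma pmfMean_const (hp1 : ∑ s, p s = 1) (c : ℝ) : pmfMean p (fun _ => c) = c := by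
  simp only [pmfMean, ← sum_mul, hp1, one_mul]

lemma pmfMean_const_sub (hp1 : ∑ s, p s = 1) (c : ℝ) :
    pmfMean p (fun s => c - f s) = c - pmfMean p f := by
  simp only [pmfMean, mul_sub, sum_sub_distrib, ← sum_mul, hp1, one_mul]

lemma pmfMean_congr (hp0 : ∀ s, 0 ≤ p s) (h : ∀ s, 0 < p s → f s = g s) :
    pmfMean p f = pmfMean p g :=
  sum_congr rfl fun s _ => by
    rcases (hp0 s).eq_or_lt with hs | hs
    · simp [← hs]
    · rw [h s hs]

lemma pmfMean_mono (hp0 : ∀ s, 0 ≤ p s) (h : ∀ s, f s ≤ g s) : pmfMean p f ≤ pmfMean p g :=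
  sum_le_sum fun s _ => mul_le_mul_of_nonneg_left (h s) (hp0 s)

lemma pmfVar_eq_pmfMean_sub_sq (hp1 : ∑ s, p s = 1) (f : S → ℝ) :
    pmfVar p f = pmfMean p (fun s => (f s - pmfMean p f) ^ 2) := by
  have (μ : ℝ) (s : S) :
      p s * (f s - μ) ^ 2 = p s * f s ^ 2 - 2 * μ * (p s * f s) + μ ^ 2 * p s := by ring
  simp only [pmfVar, pmfMean, this, sum_add_distrib, sum_sub_distrib, ← mul_sum, hp1]
  ring

lemma pmfVar_nonneg (hp : IsPmf p) (f : S → ℝ) : 0 ≤ pmfVar p f := by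
  rw [pmfVar_eq_pmfMean_sub_sq hp.2]
  exact sum_nonneg fun s _ => mul_nonneg (hp.1 s) (sq_nonneg _)

lemma pmfVar_const_sub (hp1 : ∑ s, p s = 1) (c : ℝ) :
    pmfVar p (fun s => c - f s) = pmfVar p f := by
  rw [pmfVar_eq_pmfMean_sub_sq hp1, pmfVar_eq_pmfMean_sub_sq hp1, pmfMean_const_sub hp1]
  congr 1
  ext s
  ring

theorem sq_pmfMean_sub_le_chiSqDiv_mul_pmfVar (hp : IsPmf p) (hq : ∑ s, q s = 1)
    (habs : ∀ s, p s = 0 → q s = 0) (f : S → ℝ) :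
    (pmfMean q f - pmfMean p f) ^ 2 ≤ chiSqDiv p q * pmfVar p f := by
  have hdiff : pmfMean q f - pmfMean p f =
      ∑ s ∈ univ.filter (fun s => 0 < p s), (q s - p s) * (f s - pmfMean p f) := by
    rw [sum_filter_pos_eq_sum hp.1 fun s hs hps => hs (by simp [hps, habs s hps])]
    simp only [pmfMean, sub_mul, mul_sub, sum_sub_distrib, ← sum_mul, hq, hp.2, one_mul]
    ring
  have hvar : pmfVar p f =
      ∑ s ∈ univ.filter (fun s => 0 < p s), p s * (f s - pmfMean p f) ^ 2 := by
    rw [pmfVar_eq_pmfMean_sub_sq hp.2,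
      sum_filter_pos_eq_sum hp.1 fun s hs hps => hs (by simp [hps])]
    rfl
  rw [hdiff, hvar]
  refine sum_sq_le_sum_mul_sum_of_sq_le_mul _ (fun s _ => ?_) (fun s _ => ?_) (fun s hs => ?_)
  · exact div_nonneg (sq_nonneg _) (hp.1 s)
  · exact mul_nonneg (hp.1 s) (sq_nonneg _)
  · have hps : p s ≠ 0 := (mem_filter.1 hs).2.ne'
    exact le_of_eq (by field_simp)

theorem chiSqDual_le_pmfMean (hp : IsPmf p) (hq : IsPmf q) (habs : ∀ s, p s = 0 → q s = 0)
    (hchi : chiSqDiv p q ≤ σ) (α : ℝ) : chiSqDual p v σ α ≤ pmfMean q v := by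
  set u := fun s => min (v s) α
  have hgap : |pmfMean q u - pmfMean p u| ≤ √(σ * pmfVar p u) :=
    Real.abs_le_sqrt <| (sq_pmfMean_sub_le_chiSqDiv_mul_pmfVar hp hq.2 habs u).trans <|
      mul_le_mul_of_nonneg_right hchi (pmfVar_nonneg hp u)
  calc chiSqDual p v σ α = pmfMean p u - √(σ * pmfVar p u) := rfl
    _ ≤ pmfMean q u := by linarith [neg_abs_le (pmfMean q u - pmfMean p u)]
    _ ≤ pmfMean q v := pmfMean_mono hq.1 fun s => min_le_left _ _

lemma pmfMean_mem_primalValues (hp : IsPmf p) (hσ : 0 ≤ σ) :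
    pmfMean p v ∈ primalValues p v σ :=
  ⟨p, hp, fun _ h => h, by simpa [chiSqDiv] using hσ, rfl⟩

lemma bddBelow_primalValues (hp : IsPmf p) : BddBelow (primalValues p v σ) := by
  refine ⟨chiSqDual p v σ 0, ?_⟩
  rintro _ ⟨q, hq, habs, hchi, rfl⟩
  exact chiSqDual_le_pmfMean hp hq habs hchi 0

lemma isPmf_tilted (hp : IsPmf p) (hw : ∀ s, 0 ≤ w s) (hm : 0 < pmfMean p w) :
    IsPmf (tilted p w) := by
  refine ⟨fun s => div_nonneg (mul_nonneg (hp.1 s) (hw s)) hm.le, ?_⟩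
  simp only [tilted, ← sum_div]
  exact div_self hm.ne'

lemma pmfMean_tilted (f : S → ℝ) :
    pmfMean (tilted p w) f = pmfMean p (fun s => w s * f s) / pmfMean p w := by
  simp only [pmfMean, tilted, sum_div]
  exact sum_congr rfl fun s _ => by ring

lemma chiSqDiv_tilted (hp : IsPmf p) (hm : pmfMean p w ≠ 0) :
    chiSqDiv p (tilted p w) = pmfVar p w / pmfMean p w ^ 2 := by
  rw [pmfVar_eq_pmfMean_sub_sq hp.2, pmfMean, sum_div,
    ← sum_filter_pos_eq_sum hp.1 fun s hs hps => hs (by simp [hps])]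
  refine sum_congr rfl fun s hs => ?_
  have hps : p s ≠ 0 := (mem_filter.1 hs).2.ne'
  simp only [tilted]
  field_simp

lemma chiSqDual_eq_hinge (hp1 : ∑ s, p s = 1) :
    chiSqDual p v σ α = α - pmfMean p (hinge v α) - √(σ * pmfVar p (hinge v α)) := by
  have hmin : (fun s => min (v s) α) = fun s => α - hinge v α s := by
    ext s
    rw [hinge, ← min_sub_sub_left, sub_sub_cancel, sub_zero]
  rw [chiSqDual, hmin, pmfMean_const_sub hp1, pmfVar_const_sub hp1]

lemma pmfMean_tilted_hinge (hm : pmfMean p (hinge v α) ≠ 0) :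
    pmfMean (tilted p (hinge v α)) v =
      α - pmfMean p (hinge v α) - pmfVar p (hinge v α) / pmfMean p (hinge v α) := by
  have hwv (s : S) : hinge v α s * v s = α * hinge v α s - hinge v α s ^ 2 := by
    rcases le_total (v s) α with h | h
    · rw [hinge, max_eq_left (sub_nonneg.2 h)]; ring
    · rw [hinge, max_eq_right (sub_nonpos.2 h)]; ring
  rw [pmfMean_tilted, pmfVar]
  simp only [hwv]
  simp only [pmfMean, mul_sub, sum_sub_distrib, mul_left_comm _ α, ← mul_sum] at hm ⊢
  field_simp
  ring

lemma mem_primalValues_of_pmfVar_hinge_le (hp : IsPmf p) (hm : 0 < pmfMean p (hinge v α))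
    (hvar : pmfVar p (hinge v α) ≤ σ * pmfMean p (hinge v α) ^ 2) :
    α - pmfMean p (hinge v α) - pmfVar p (hinge v α) / pmfMean p (hinge v α) ∈
      primalValues p v σ :=
  ⟨tilted p (hinge v α), isPmf_tilted hp (fun _ => le_max_right _ _) hm,
    fun s hs => by simp [tilted, hs],
    by rw [chiSqDiv_tilted hp hm.ne', div_le_iff₀ (by positivity)]; exact hvar,
    (pmfMean_tilted_hinge hm.ne').symm⟩

lemma chiSqDual_eq_of_pmfVar_hinge_eq (hp1 : ∑ s, p s = 1) (hσ : 0 ≤ σ)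
    (hm : 0 < pmfMean p (hinge v α))
    (hvar : pmfVar p (hinge v α) = σ * pmfMean p (hinge v α) ^ 2) :
    chiSqDual p v σ α =
      α - pmfMean p (hinge v α) - pmfVar p (hinge v α) / pmfMean p (hinge v α) := by
  rw [chiSqDual_eq_hinge hp1, hvar, show σ * (σ * pmfMean p (hinge v α) ^ 2) =
    (σ * pmfMean p (hinge v α)) ^ 2 by ring, Real.sqrt_sq (by positivity)]
  field_simp

lemma pmfMean_hinge_pos (hp0 : ∀ s, 0 ≤ p s) {s : S} (hs : 0 < p s) (hα : v s < α) :
    0 < pmfMean p (hinge v α) :=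
  sum_pos' (fun t _ => mul_nonneg (hp0 t) (le_max_right _ _))
    ⟨s, mem_univ s, mul_pos hs (lt_max_of_lt_left (sub_pos.2 hα))⟩

lemma continuous_pmfMean_hinge : Continuous fun α => pmfMean p (hinge v α) := by
  unfold pmfMean hinge
  fun_prop

lemma continuous_pmfVar_hinge : Continuous fun α => pmfVar p (hinge v α) := by
  unfold pmfVar pmfMean hinge
  fun_prop

lemma exists_pmfVar_hinge_eq [Nonempty S] (hp : IsPmf p) (hσ : 0 < σ) {a : ℝ}
    (ha : σ * pmfMean p (hinge v a) ^ 2 < pmfVar p (hinge v a)) :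
    ∃ α, a ≤ α ∧ pmfVar p (hinge v α) = σ * pmfMean p (hinge v α) ^ 2 := by
  obtain ⟨smax, hmax⟩ := Finite.exists_max v
  set b := max a (v smax + √(pmfVar p v / σ))
  have hvb (s : S) : v s ≤ b :=
    (hmax s).trans (le_max_of_le_right (le_add_of_nonneg_right (Real.sqrt_nonneg _)))
  have hmean : pmfMean p v ≤ v smax := (pmfMean_mono hp.1 hmax).trans_eq (pmfMean_const hp.2 _)
  have hb : pmfVar p (hinge v b) - σ * pmfMean p (hinge v b) ^ 2 ≤ 0 := by
    rw [hinge_of_forall_le hvb, pmfVar_const_sub hp.2, pmfMean_const_sub hp.2, sub_nonpos]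
    have hdist : √(pmfVar p v / σ) ≤ b - pmfMean p v := by
      linarith [le_max_right a (v smax + √(pmfVar p v / σ))]
    have := pow_le_pow_left₀ (Real.sqrt_nonneg _) hdist 2
    rwa [Real.sq_sqrt (div_nonneg (pmfVar_nonneg hp v) hσ.le), div_le_iff₀' hσ] at this
  have hcont : Continuous fun α => pmfVar p (hinge v α) - σ * pmfMean p (hinge v α) ^ 2 :=
    continuous_pmfVar_hinge.sub (continuous_const.mul (continuous_pmfMean_hinge.pow 2))
  obtain ⟨α, ⟨haα, -⟩, hα⟩ :=
    intermediate_value_Icc' (le_max_left a _) hcont.continuousOn ⟨hb, (sub_pos.2 ha).le⟩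
  exact ⟨α, haα, sub_eq_zero.1 hα⟩

lemma chiSqDual_eq_self (hp : IsPmf p) (h : ∀ s, 0 < p s → α ≤ v s) :
    chiSqDual p v σ α = α := by
  have hmin (s : S) (hs : 0 < p s) : min (v s) α = α := min_eq_right (h s hs)
  have hmean : pmfMean p (fun s => min (v s) α) = α :=
    (pmfMean_congr hp.1 hmin).trans (pmfMean_const hp.2 α)
  have hmean_sq : pmfMean p (fun s => min (v s) α ^ 2) = α ^ 2 :=
    (pmfMean_congr hp.1 fun s hs => by rw [hmin s hs]).trans (pmfMean_const hp.2 _)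
  simp [chiSqDual, pmfVar, hmean, hmean_sq]

theorem exists_chiSqDual_ge_sInf_of_pos [Nonempty S] (hp : IsPmf p) (hv : ∀ s, 0 ≤ v s)
    (hσ : 0 < σ) : ∃ α, 0 ≤ α ∧ sInf (primalValues p v σ) ≤ chiSqDual p v σ α := by
  obtain ⟨s₀, hs₀, hmin⟩ := exists_min_image (univ.filter fun s => 0 < p s) v
    (let ⟨s, hs⟩ := hp.exists_pos; ⟨s, mem_filter.2 ⟨mem_univ s, hs⟩⟩)
  have hps₀ : 0 < p s₀ := (mem_filter.1 hs₀).2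
  by_cases hnear : ∀ ε > 0, ∃ α ∈ Set.Ioo (v s₀) (v s₀ + ε),
      pmfVar p (hinge v α) ≤ σ * pmfMean p (hinge v α) ^ 2
  · refine ⟨v s₀, hv s₀, ?_⟩
    rw [chiSqDual_eq_self hp fun s hs => hmin s (mem_filter.2 ⟨mem_univ s, hs⟩)]
    refine le_of_forall_pos_lt_add fun ε hε => ?_
    obtain ⟨α, ⟨hlo, hhi⟩, hvar⟩ := hnear ε hε
    have hm := pmfMean_hinge_pos hp.1 hps₀ hlo
    calc sInf (primalValues p v σ)
        ≤ α - pmfMean p (hinge v α) - pmfVar p (hinge v α) / pmfMean p (hinge v α) :=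
          csInf_le (bddBelow_primalValues hp) (mem_primalValues_of_pmfVar_hinge_le hp hm hvar)
      _ ≤ α := by
          have := div_nonneg (pmfVar_nonneg hp (hinge v α)) hm.le
          linarith
      _ < v s₀ + ε := hhi
  · push Not at hnear
    obtain ⟨ε, hε, hgap⟩ := hnear
    obtain ⟨α, hα, hvar⟩ :=
      exists_pmfVar_hinge_eq hp hσ (hgap (v s₀ + ε / 2) ⟨by linarith, by linarith⟩)
    have hm := pmfMean_hinge_pos hp.1 hps₀ (show v s₀ < α by linarith)
    refine ⟨α, by linarith [hv s₀], ?_⟩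
    rw [chiSqDual_eq_of_pmfVar_hinge_eq hp.2 hσ.le hm hvar]
    exact csInf_le (bddBelow_primalValues hp) (mem_primalValues_of_pmfVar_hinge_le hp hm hvar.le)

theorem exists_chiSqDual_ge_sInf [Nonempty S] (hp : IsPmf p) (hv : ∀ s, 0 ≤ v s)
    (hσ : 0 ≤ σ) : ∃ α, 0 ≤ α ∧ sInf (primalValues p v σ) ≤ chiSqDual p v σ α := by
  rcases hσ.eq_or_lt with rfl | hσ
  · obtain ⟨smax, hmax⟩ := Finite.exists_max v
    refine ⟨v smax, hv smax, ?_⟩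
    have hdual : chiSqDual p v 0 (v smax) = pmfMean p v := by
      simp [chiSqDual, min_eq_left (hmax _)]
    rw [hdual]
    exact csInf_le (bddBelow_primalValues hp) (pmfMean_mem_primalValues hp le_rfl)
  · exact exists_chiSqDual_ge_sInf_of_pos hp hv hσ

end

/-- Strong duality for the chi-square uncertainty set. -/
theorem chisq_strong_duality
    {S : Type*} [Fintype S] [Nonempty S]
    (p : S → ℝ) (hp : IsPmf p)
    (v : S → ℝ) (hv : ∀ s, 0 ≤ v s)
    (σ : ℝ) (hσ : 0 ≤ σ) :
    sInf {x : ℝ | ∃ q : S → ℝ, IsPmf q ∧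
        (∀ s, p s = 0 → q s = 0) ∧
        (∑ s ∈ Finset.univ.filter (fun s => 0 < p s), (q s - p s) ^ 2 / p s) ≤ σ ∧
        x = ∑ s, q s * v s}
      =
    sSup {x : ℝ | ∃ α : ℝ, 0 ≤ α ∧
        x = (∑ s, p s * min (v s) α)
          - Real.sqrt (σ * ((∑ s, p s * (min (v s) α) ^ 2)
              - (∑ s, p s * min (v s) α) ^ 2))} := by
  show sInf (primalValues p v σ) = sSup (dualValues p v σ)
  have hweak : ∀ x ∈ dualValues p v σ, ∀ y ∈ primalValues p v σ, x ≤ y := by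
    rintro _ ⟨α, -, rfl⟩ _ ⟨q, hq, habs, hchi, rfl⟩
    exact chiSqDual_le_pmfMean hp hq habs hchi α
  have hprimal : pmfMean p v ∈ primalValues p v σ := pmfMean_mem_primalValues hp hσ
  obtain ⟨α, hα, hsInf⟩ := exists_chiSqDual_ge_sInf hp hv hσ
  have hdual_bdd : BddAbove (dualValues p v σ) := ⟨_, fun x hx => hweak x hx _ hprimal⟩
  refine le_antisymm (hsInf.trans (le_csSup hdual_bdd ⟨α, hα, rfl⟩)) ?_
  exact csSup_le ⟨_, 0, le_rfl, rfl⟩ fun x hx => le_csInf ⟨_, hprimal⟩ (hweak x hx)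
end

section
/- Contraction of the robust Bellman operator: Let S and A be finite nonempty sets and γ ∈ [0,1). For every pair (s,a) ∈ S × A let 𝒫_{s,a} be a nonempty set of pmfs on S and let c(s,a) ∈ ℝ. Define T : ℝ^{S×A} → ℝ^{S×A} by T(Q)(s,a) = c(s,a) + γ · inf_{q ∈ 𝒫_{s,a}} ∑_{s'∈S} q(s') · max_{a'∈A} Q(s',a'). Then for all Q, Q' ∈ ℝ^{S×A}, ‖T(Q) − T(Q')‖_∞ ≤ γ · ‖Q − Q'‖_∞, where ‖X‖_∞ = max_{(s,a)} |X(s,a)|. -/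
open Finset

/-- Contraction of the robust Bellman operator. -/
theorem robust_bellman_contraction
    {S A : Type*} [Fintype S] [Fintype A] [Nonempty S] [Nonempty A]
    (γ : ℝ) (hγ0 : 0 ≤ γ) (hγ1 : γ < 1)
    (P : S → A → Set (S → ℝ))
    (hPne : ∀ s a, (P s a).Nonempty)
    (hPpmf : ∀ s a, ∀ q ∈ P s a, IsPmf q)
    (c : S → A → ℝ)
    (T : (S × A → ℝ) → (S × A → ℝ))
    (hT : ∀ Q sa, T Q sa = c sa.1 sa.2 + γ *
        sInf {x : ℝ | ∃ q ∈ P sa.1 sa.2, x = ∑ s', q s' * (⨆ a', Q (s', a'))})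
    (Q Q' : S × A → ℝ) :
    (⨆ sa : S × A, |T Q sa - T Q' sa|) ≤ γ * ⨆ sa : S × A, |Q sa - Q' sa| := by
  set M := ⨆ sa : S × A, |Q sa - Q' sa| with hMdef
  have hbddabs : ∀ (F : S × A → ℝ), BddAbove (Set.range fun sa => |F sa|) :=
    fun F => Set.Finite.bddAbove (Set.finite_range _)
  have hbdd : ∀ (F : S × A → ℝ) (s' : S), BddAbove (Set.range fun a' => F (s', a')) :=
    fun F s' => Set.Finite.bddAbove (Set.finite_range _)
  -- sup difference bound
  have key : ∀ (F G : S × A → ℝ) (s' : S),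
      (⨆ a', F (s', a')) - (⨆ a', G (s', a')) ≤ ⨆ sa : S × A, |F sa - G sa| := by
    intro F G s'
    rw [sub_le_iff_le_add]
    apply ciSup_le
    intro a'
    have h1 : F (s', a') ≤ |F (s', a') - G (s', a')| + G (s', a') := by
      have := le_abs_self (F (s', a') - G (s', a')); linarith
    refine h1.trans (add_le_add ?_ ?_)
    · have := le_ciSup (hbddabs (F - G)) (s', a')
      simpa using this
    · exact le_ciSup (hbdd G s') a'
  have hsup : ∀ s' : S, |(⨆ a', Q (s', a')) - (⨆ a', Q' (s', a'))| ≤ M := by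
    intro s'
    rw [abs_sub_le_iff]
    refine ⟨key Q Q' s', ?_⟩
    have := key Q' Q s'
    simpa [abs_sub_comm] using this
  -- boundedness below of the candidate sets
  have hbb : ∀ (F : S × A → ℝ) (s : S) (a : A),
      BddBelow {x : ℝ | ∃ q ∈ P s a, x = ∑ s', q s' * (⨆ a', F (s', a'))} := by
    intro F s a
    set B := ⨆ sa : S × A, |F sa| with hB
    refine ⟨-B, ?_⟩
    rintro x ⟨q, hq, rfl⟩
    obtain ⟨hq0, hq1⟩ := hPpmf s a q hq
    have hle : ∀ s' : S, -B ≤ ⨆ a', F (s', a') := by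
      intro s'
      obtain ⟨a0⟩ := ‹Nonempty A›
      have h1 : |F (s', a0)| ≤ B := le_ciSup (hbddabs F) (s', a0)
      have h2 : F (s', a0) ≤ ⨆ a', F (s', a') := le_ciSup (hbdd F s') a0
      have := neg_abs_le (F (s', a0))
      linarith
    calc -B = ∑ s', q s' * (-B) := by
            rw [← Finset.sum_mul, hq1, one_mul]
      _ ≤ ∑ s', q s' * (⨆ a', F (s', a')) :=
            Finset.sum_le_sum fun s' _ => mul_le_mul_of_nonneg_left (hle s') (hq0 s')
  -- one-sided inf comparison
  have oneside : ∀ (F G : S × A → ℝ), (∀ s' : S,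
        (⨆ a', F (s', a')) - (⨆ a', G (s', a')) ≤ M) → ∀ (s : S) (a : A),
      sInf {x : ℝ | ∃ q ∈ P s a, x = ∑ s', q s' * (⨆ a', F (s', a'))} ≤
      sInf {x : ℝ | ∃ q ∈ P s a, x = ∑ s', q s' * (⨆ a', G (s', a'))} + M := by
    intro F G hFG s a
    rw [← sub_le_iff_le_add]
    apply le_csInf
    · obtain ⟨q, hq⟩ := hPne s a
      exact ⟨_, q, hq, rfl⟩
    rintro x ⟨q, hq, rfl⟩
    obtain ⟨hq0, hq1⟩ := hPpmf s a q hq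
    have h1 : sInf {x : ℝ | ∃ q ∈ P s a, x = ∑ s', q s' * (⨆ a', F (s', a'))} ≤
        ∑ s', q s' * (⨆ a', F (s', a')) := csInf_le (hbb F s a) ⟨q, hq, rfl⟩
    have h2 : ∑ s', q s' * (⨆ a', F (s', a')) ≤
        (∑ s', q s' * (⨆ a', G (s', a'))) + M := by
      calc ∑ s', q s' * (⨆ a', F (s', a'))
          ≤ ∑ s', q s' * ((⨆ a', G (s', a')) + M) := by
            refine Finset.sum_le_sum fun s' _ => mul_le_mul_of_nonneg_left ?_ (hq0 s')
            have := hFG s'; linarith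
        _ = (∑ s', q s' * (⨆ a', G (s', a'))) + M := by
            simp [mul_add, Finset.sum_add_distrib, ← Finset.sum_mul, hq1]
    linarith
  -- main bound per state-action pair
  apply ciSup_le
  rintro ⟨s, a⟩
  rw [hT, hT]
  simp only
  have hI : |sInf {x : ℝ | ∃ q ∈ P s a, x = ∑ s', q s' * (⨆ a', Q (s', a'))} -
      sInf {x : ℝ | ∃ q ∈ P s a, x = ∑ s', q s' * (⨆ a', Q' (s', a'))}| ≤ M := by
    rw [abs_sub_le_iff]
    constructor
    · have := oneside Q Q' (fun s' => (le_abs_self _).trans (hsup s')) s a; linarith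
    · have := oneside Q' Q (fun s' => by
        have := hsup s'; rw [abs_sub_le_iff] at this; linarith [this.2]) s a
      linarith
  have : c s a + γ * sInf {x : ℝ | ∃ q ∈ P s a, x = ∑ s', q s' * (⨆ a', Q (s', a'))} -
      (c s a + γ * sInf {x : ℝ | ∃ q ∈ P s a, x = ∑ s', q s' * (⨆ a', Q' (s', a'))}) =
      γ * (sInf {x : ℝ | ∃ q ∈ P s a, x = ∑ s', q s' * (⨆ a', Q (s', a'))} -
      sInf {x : ℝ | ∃ q ∈ P s a, x = ∑ s', q s' * (⨆ a', Q' (s', a'))}) := by ring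
  rw [this, abs_mul, abs_of_nonneg hγ0]
  exact mul_le_mul_of_nonneg_left hI hγ0
end

section
/- Unbiasedness of the threshold multi-level Monte Carlo estimator: Let S be a finite nonempty set, p a pmf on S, and M ∈ ℕ. On a probability space let (X_i)_{i ≥ 0} be i.i.d. S-valued random variables with law p, and let N be an ℕ-valued random variable independent of (X_i) with ℙ(N = n) = 2^{−(n+1)} for every n ∈ ℕ. For k ≥ 1 let p̂_k be the empirical pmf of X_1,…,X_k, let p̂^E_k be the empirical pmf of the even-indexed samples X_2, X_4, …, X_{2k}, and let p̂^O_k be the empirical pmf of the odd-indexed samples X_1, X_3, …, X_{2k−1}. Let h be any bounded real-valued function on the set of pmfs on S, and let q_0 denote the point-mass pmf at X_0. Define the estimator Z = h(q_0) + 1{N ≤ M} · 2^{N+1} · ( h(p̂_{2^{N+1}}) − (1/2)·h(p̂^E_{2^N}) − (1/2)·h(p̂^O_{2^N}) ). Then E[Z] = E[ h(p̂_{2^{M+1}}) ]. -/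
open Finset MeasureTheory ProbabilityTheory

/-- The empirical pmf of the samples `X 1, …, X k`. -/
noncomputable def empPmf {S : Type*} [Fintype S] [DecidableEq S] {Ω : Type*}
    (X : ℕ → Ω → S) (k : ℕ) (ω : Ω) : S → ℝ :=
  fun s => (((Finset.Icc 1 k).filter (fun i => X i ω = s)).card : ℝ) / k

/-!
Every quantity in the estimator is a function of finitely many samples with values in the finite
set `S`, hence integrable. Let `ν` be the common law of the `X i`. For an injective choice of
indices `e : Fin k → ℕ` the sample vector `(X (e j))_j` has law `ν^⊗k`, so `E f(p̂)` depends only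
on the number `k` of samples; call it `m k`. Since `N` is independent of the samples, level `n`
contributes `ℙ(N = n) · 2^(n+1) · (m (2^(n+1)) - m (2^n) / 2 - m (2^n) / 2)`, which is
`m (2^(n+1)) - m (2^n)`, and the sum over `n ≤ M` telescopes from `m 1 = E h(q₀)` to
`m (2^(M+1))`.
-/

noncomputable def empPmfOf {S : Type*} [Fintype S] [DecidableEq S] {k : ℕ} (v : Fin k → S) :
    S → ℝ :=
  fun s => (#{i | v i = s} : ℝ) / k

section EmpiricalPmf

variable {S : Type*} [Fintype S] [DecidableEq S]

lemma empPmf_eq_empPmfOf {Ω : Type*} (X : ℕ → Ω → S) (k : ℕ) (ω : Ω) :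
    empPmf X k ω = empPmfOf (fun i : Fin k => X (i + 1) ω) := by
  funext s
  suffices #{i : Fin k | X (i + 1) ω = s} = #{j ∈ Icc 1 k | X j ω = s} by
    simp only [empPmf, empPmfOf, this]
  refine card_bij (fun i _ => i.1 + 1) ?_ (fun i _ j _ h => Fin.ext (by omega)) ?_
  · intro i hi
    simp only [mem_filter, mem_univ, true_and, mem_Icc] at hi ⊢
    exact ⟨⟨by omega, by omega⟩, hi⟩
  · intro j hj
    simp only [mem_filter, mem_Icc] at hj
    refine ⟨⟨j - 1, by omega⟩, ?_, by simp only; omega⟩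
    simpa [Nat.sub_add_cancel hj.1.1] using hj.2

lemma ite_eq_empPmfOf_const (x : S) :
    (fun s => if x = s then (1 : ℝ) else 0) = empPmfOf (fun _ : Fin 1 => x) := by
  funext s
  by_cases hxs : x = s <;> simp [empPmfOf, hxs]

end EmpiricalPmf

lemma ite_le_eq_sum_indicator {Ω E : Type*} [AddCommMonoid E] (N : Ω → ℕ) (M : ℕ)
    (g : ℕ → Ω → E) (ω : Ω) :
    (if N ω ≤ M then g (N ω) ω else 0) = ∑ n ∈ range (M + 1), (N ⁻¹' {n}).indicator (g n) ω := by
  classical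
  simp only [Set.indicator_apply, Set.mem_preimage, Set.mem_singleton_iff, sum_ite_eq, mem_range,
    Nat.lt_succ_iff]

section Law

variable {Ω β γ : Type*} [MeasurableSpace Ω] {μ : Measure Ω} [MeasurableSpace β]
  [MeasurableSpace γ]

lemma hasLaw_map_of_measure_preimage_singleton [Countable β] [MeasurableSingletonClass β]
    {X Y : Ω → β} (hX : Measurable X) (hY : Measurable Y)
    (h : ∀ b, μ (X ⁻¹' {b}) = μ (Y ⁻¹' {b})) : HasLaw X (μ.map Y) μ where
  aemeasurable := hX.aemeasurable
  map_eq := Measure.ext_iff_singleton.2 fun b => by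
    rw [Measure.map_apply hX (measurableSet_singleton b),
      Measure.map_apply hY (measurableSet_singleton b), h]

lemma integrable_comp_of_finite [IsFiniteMeasure μ] [Finite β] [MeasurableSingletonClass β]
    {Y : Ω → β} (hY : Measurable Y) (f : β → ℝ) : Integrable (fun ω => f (Y ω)) μ :=
  Integrable.of_finite.comp_measurable hY

lemma ProbabilityTheory.IndepFun.integral_indicator_comp {N : Ω → β} {Y : Ω → γ}
    (hNY : IndepFun N Y μ) (hN : Measurable N) (hY : Measurable Y) {A : Set β}
    (hA : MeasurableSet A) {f : γ → ℝ} (hf : Measurable f) :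
    ∫ ω, (N ⁻¹' A).indicator (fun ω => f (Y ω)) ω ∂μ = μ.real (N ⁻¹' A) * ∫ ω, f (Y ω) ∂μ := by
  have hprod : (N ⁻¹' A).indicator (fun ω => f (Y ω)) = (A.indicator 1 ∘ N) * (f ∘ Y) := by
    ext ω
    by_cases hω : N ω ∈ A <;> simp [Set.indicator, hω]
  rw [hprod, hNY.integral_comp_mul_comp hN.aemeasurable hY.aemeasurable
    ((measurable_one.indicator hA).aestronglyMeasurable) hf.aestronglyMeasurable,
    ← integral_indicator_one (hN hA)]
  rfl

end Law

section Sampling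

variable {S : Type*} [Fintype S] [DecidableEq S] [MeasurableSpace S] [MeasurableSingletonClass S]
  {Ω : Type*} [MeasurableSpace Ω] {μ : Measure Ω} {ν : Measure S} {X : ℕ → Ω → S}

noncomputable def empMean (ν : Measure S) (f : (S → ℝ) → ℝ) (k : ℕ) : ℝ :=
  ∫ v, f (empPmfOf v) ∂(Measure.pi fun _ : Fin k => ν)

lemma integral_comp_empPmfOf (hX : iIndepFun X μ) (hlaw : ∀ i, HasLaw (X i) ν μ) {k : ℕ}
    {e : Fin k → ℕ} (he : Function.Injective e) (f : (S → ℝ) → ℝ) :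
    ∫ ω, f (empPmfOf fun j => X (e j) ω) ∂μ = empMean ν f k :=
  ((hX.precomp he).hasLaw_pi fun j => hlaw (e j)).integral_comp
    (f := fun v => f (empPmfOf v)) Measurable.of_discrete.aestronglyMeasurable

lemma integral_comp_empPmf (hX : iIndepFun X μ) (hlaw : ∀ i, HasLaw (X i) ν μ) {σ : ℕ → ℕ}
    (hσ : Function.Injective σ) (f : (S → ℝ) → ℝ) (k : ℕ) :
    ∫ ω, f (empPmf (fun i => X (σ i)) k ω) ∂μ = empMean ν f k := by
  simp_rw [empPmf_eq_empPmfOf]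
  exact integral_comp_empPmfOf hX hlaw (e := fun j : Fin k => σ (j + 1))
    (hσ.comp fun i j h => Fin.ext (Nat.succ_injective h)) f

lemma measurable_comp_empPmf (hXm : ∀ i, Measurable (X i)) (σ : ℕ → ℕ) (f : (S → ℝ) → ℝ)
    (k : ℕ) : Measurable fun ω => f (empPmf (fun i => X (σ i)) k ω) := by
  simp_rw [empPmf_eq_empPmfOf]
  exact (Measurable.of_discrete (f := fun v : Fin k → S => f (empPmfOf v))).comp
    (measurable_pi_lambda _ fun j => hXm _)

lemma integrable_comp_empPmf [IsFiniteMeasure μ] (hXm : ∀ i, Measurable (X i)) (σ : ℕ → ℕ)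
    (f : (S → ℝ) → ℝ) (k : ℕ) : Integrable (fun ω => f (empPmf (fun i => X (σ i)) k ω)) μ := by
  simp_rw [empPmf_eq_empPmfOf]
  exact integrable_comp_of_finite (measurable_pi_lambda _ fun j : Fin k => hXm (σ (j + 1)))
    fun v : Fin k → S => f (empPmfOf v)

noncomputable def levelDiff (f : (S → ℝ) → ℝ) (X : ℕ → Ω → S) (n : ℕ) (ω : Ω) : ℝ :=
  f (empPmf X (2 ^ (n + 1)) ω) - 1 / 2 * f (empPmf (fun i => X (2 * i)) (2 ^ n) ω)
    - 1 / 2 * f (empPmf (fun i => X (2 * i - 1)) (2 ^ n) ω)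

lemma measurable_levelDiff (hXm : ∀ i, Measurable (X i)) (f : (S → ℝ) → ℝ) (n : ℕ) :
    Measurable (levelDiff f X n) :=
  ((measurable_comp_empPmf hXm id f _).sub
    ((measurable_comp_empPmf hXm (2 * ·) f _).const_mul _)).sub
    ((measurable_comp_empPmf hXm (2 * · - 1) f _).const_mul _)

lemma integrable_levelDiff [IsFiniteMeasure μ] (hXm : ∀ i, Measurable (X i))
    (f : (S → ℝ) → ℝ) (n : ℕ) : Integrable (levelDiff f X n) μ :=
  ((integrable_comp_empPmf hXm id f _).sub
    ((integrable_comp_empPmf hXm (2 * ·) f _).const_mul _)).sub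
    ((integrable_comp_empPmf hXm (2 * · - 1) f _).const_mul _)

lemma integral_levelDiff [IsFiniteMeasure μ] (hXm : ∀ i, Measurable (X i)) (hX : iIndepFun X μ)
    (hlaw : ∀ i, HasLaw (X i) ν μ) (f : (S → ℝ) → ℝ) (n : ℕ) :
    ∫ ω, levelDiff f X n ω ∂μ = empMean ν f (2 ^ (n + 1)) - empMean ν f (2 ^ n) := by
  have hinj_odd : Function.Injective (2 * · - 1 : ℕ → ℕ) := fun i j h => by simp only at h; omega
  have hall : ∫ ω, f (empPmf X (2 ^ (n + 1)) ω) ∂μ = empMean ν f (2 ^ (n + 1)) :=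
    integral_comp_empPmf hX hlaw Function.injective_id f _
  have heven := integral_comp_empPmf hX hlaw (mul_right_injective₀ two_ne_zero) f (2 ^ n)
  have hodd := integral_comp_empPmf hX hlaw hinj_odd f (2 ^ n)
  have hA : Integrable (fun ω => f (empPmf X (2 ^ (n + 1)) ω)) μ :=
    integrable_comp_empPmf hXm id f _
  have hE := (integrable_comp_empPmf (μ := μ) hXm (2 * ·) f (2 ^ n)).const_mul (1 / 2)
  have hO := (integrable_comp_empPmf (μ := μ) hXm (2 * · - 1) f (2 ^ n)).const_mul (1 / 2)
  unfold levelDiff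
  rw [integral_sub ?_ hO, integral_sub hA hE, integral_const_mul, integral_const_mul,
    hall, heven, hodd]
  · ring
  · exact hA.sub hE

lemma integral_indicator_levelDiff {β : Type*} [MeasurableSpace β] [IsFiniteMeasure μ]
    (hXm : ∀ i, Measurable (X i)) (hX : iIndepFun X μ) (hlaw : ∀ i, HasLaw (X i) ν μ)
    {N : Ω → β} (hN : Measurable N) (hNX : IndepFun N (fun ω i => X i ω) μ) {A : Set β}
    (hA : MeasurableSet A) (f : (S → ℝ) → ℝ) (n : ℕ) (c : ℝ) :
    ∫ ω, (N ⁻¹' A).indicator (fun ω => c * levelDiff f X n ω) ω ∂μ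
      = μ.real (N ⁻¹' A) * c * (empMean ν f (2 ^ (n + 1)) - empMean ν f (2 ^ n)) :=
  calc _ = μ.real (N ⁻¹' A) * ∫ ω, c * levelDiff f X n ω ∂μ :=
        -- `levelDiff f X n ω` is `levelDiff` of the coordinate process at the path `(X i ω)_i`
        hNX.integral_indicator_comp hN (measurable_pi_lambda _ hXm) hA
          (f := fun x => c * levelDiff f (fun i x => x i) n x)
          ((measurable_levelDiff measurable_pi_apply f n).const_mul c)
    _ = _ := by rw [integral_const_mul, integral_levelDiff hXm hX hlaw, mul_assoc]

end Sampling

theorem tmlmc_unbiased_general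
    {S : Type*} [Fintype S] [DecidableEq S]
    [MeasurableSpace S] [MeasurableSingletonClass S]
    {Ω : Type*} [MeasurableSpace Ω] (μ : Measure Ω) [IsProbabilityMeasure μ]
    (p : S → ℝ) (M : ℕ)
    (X : ℕ → Ω → S) (hXmeas : ∀ i, Measurable (X i))
    (hXiid : iIndepFun X μ)
    (hXlaw : ∀ i s, μ (X i ⁻¹' {s}) = ENNReal.ofReal (p s))
    (N : Ω → ℕ) (hNmeas : Measurable N)
    (hNindep : IndepFun N (fun ω i => X i ω) μ)
    (hNlaw : ∀ n : ℕ, μ (N ⁻¹' {n}) = ENNReal.ofReal ((1 / 2 : ℝ) ^ (n + 1)))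
    (h : (S → ℝ) → ℝ) :
    (∫ ω, (h (fun s => if X 0 ω = s then 1 else 0)
        + if N ω ≤ M then
            (2 : ℝ) ^ (N ω + 1) *
              (h (empPmf X (2 ^ (N ω + 1)) ω)
                - (1 / 2) * h (empPmf (fun i => X (2 * i)) (2 ^ N ω) ω)
                - (1 / 2) * h (empPmf (fun i => X (2 * i - 1)) (2 ^ N ω) ω))
          else 0) ∂μ)
      = ∫ ω, h (empPmf X (2 ^ (M + 1)) ω) ∂μ := by
  obtain ⟨ν, hlaw⟩ : ∃ ν, ∀ i, HasLaw (X i) ν μ := ⟨μ.map (X 0), fun i =>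
    hasLaw_map_of_measure_preimage_singleton (hXmeas i) (hXmeas 0) fun s => by rw [hXlaw, hXlaw]⟩
  set term : ℕ → Ω → ℝ := fun n => (N ⁻¹' {n}).indicator fun ω => 2 ^ (n + 1) * levelDiff h X n ω
  have hterm_int : ∀ n, Integrable (term n) μ := fun n =>
    ((integrable_levelDiff hXmeas h n).const_mul _).indicator (hNmeas (measurableSet_singleton n))
  have hterm : ∀ n, ∫ ω, term n ω ∂μ = empMean ν h (2 ^ (n + 1)) - empMean ν h (2 ^ n) := by
    intro n
    rw [integral_indicator_levelDiff hXmeas hXiid hlaw hNmeas hNindep (measurableSet_singleton n),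
      measureReal_def, hNlaw, ENNReal.toReal_ofReal (by positivity), ← mul_pow]
    norm_num
  have hfirst : Integrable (fun ω => h (empPmfOf fun _ : Fin 1 => X 0 ω)) μ :=
    integrable_comp_of_finite (measurable_pi_lambda _ fun _ : Fin 1 => hXmeas 0)
      fun v => h (empPmfOf v)
  calc _ = ∫ ω, (h (empPmfOf fun _ : Fin 1 => X 0 ω) + ∑ n ∈ range (M + 1), term n ω) ∂μ :=
        integral_congr_ae <| ae_of_all _ fun ω => by
          rw [ite_eq_empPmfOf_const]
          exact congrArg _
            (ite_le_eq_sum_indicator N M (fun n ω => 2 ^ (n + 1) * levelDiff h X n ω) ω)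
    _ = empMean ν h 1 + ∑ n ∈ range (M + 1), (empMean ν h (2 ^ (n + 1)) - empMean ν h (2 ^ n)) := by
        rw [integral_add hfirst (integrable_finsetSum _ fun n _ => hterm_int n),
          integral_finsetSum _ fun n _ => hterm_int n, sum_congr rfl fun n _ => hterm n,
          integral_comp_empPmfOf hXiid hlaw (e := fun _ : Fin 1 => 0)
            (Function.injective_of_subsingleton _)]
    _ = empMean ν h (2 ^ (M + 1)) := by
        rw [sum_range_sub (fun m => empMean ν h (2 ^ m)), pow_zero, add_sub_cancel]
    _ = _ := (integral_comp_empPmf hXiid hlaw Function.injective_id h _).symm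

/-- Unbiasedness of the threshold multi-level Monte Carlo estimator. -/
theorem tmlmc_unbiased
    {S : Type*} [Fintype S] [Nonempty S] [DecidableEq S]
    [MeasurableSpace S] [MeasurableSingletonClass S]
    {Ω : Type*} [MeasurableSpace Ω] (μ : Measure Ω) [IsProbabilityMeasure μ]
    (p : S → ℝ) (hp : IsPmf p) (M : ℕ)
    (X : ℕ → Ω → S) (hXmeas : ∀ i, Measurable (X i))
    (hXiid : iIndepFun X μ)
    (hXlaw : ∀ i s, μ (X i ⁻¹' {s}) = ENNReal.ofReal (p s))
    (N : Ω → ℕ) (hNmeas : Measurable N)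
    (hNindep : IndepFun N (fun ω i => X i ω) μ)
    (hNlaw : ∀ n : ℕ, μ (N ⁻¹' {n}) = ENNReal.ofReal ((1 / 2 : ℝ) ^ (n + 1)))
    (h : (S → ℝ) → ℝ) (C : ℝ) (hC : ∀ q : S → ℝ, IsPmf q → |h q| ≤ C) :
    (∫ ω, (h (fun s => if X 0 ω = s then 1 else 0)
        + if N ω ≤ M then
            (2 : ℝ) ^ (N ω + 1) *
              (h (empPmf X (2 ^ (N ω + 1)) ω)
                - (1 / 2) * h (empPmf (fun i => X (2 * i)) (2 ^ N ω) ω)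
                - (1 / 2) * h (empPmf (fun i => X (2 * i - 1)) (2 ^ N ω) ω))
          else 0) ∂μ)
      = ∫ ω, h (empPmf X (2 ^ (M + 1)) ω) ∂μ :=
  tmlmc_unbiased_general μ p M X hXmeas hXiid hXlaw N hNmeas hNindep hNlaw h
end

section
/- Stability of the chi-square dual value: Let S be a finite nonempty set, let p and q be pmfs on S, let v : S → ℝ with v(s) ≥ 0 for all s, and let σ ≥ 0. Then | f*_{χ²}(q, v) − f*_{χ²}(p, v) | ≤ max_{0 ≤ α ≤ max_{s∈S} v(s)} | E_q[(v)_α] − E_p[(v)_α] | + sqrt(σ) · max_{0 ≤ α ≤ max_{s∈S} v(s)} | sqrt(Var_q[(v)_α]) − sqrt(Var_p[(v)_α]) |. -/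
open Finset

/-- The expectation `E_p[f] = ∑ s, p s * f s`. -/
def expect {S : Type*} [Fintype S] (p f : S → ℝ) : ℝ := ∑ s, p s * f s

/-- The variance `Var_p[f] = E_p[f²] − (E_p[f])²`. -/
def varOf {S : Type*} [Fintype S] (p f : S → ℝ) : ℝ :=
  expect p (fun s => f s ^ 2) - (expect p f) ^ 2

/-- The chi-square dual value with uncertainty level `σ`:
`f*_{χ²}(p, v) = sup_{α ≥ 0} { E_p[(v)_α] − sqrt(σ·Var_p[(v)_α]) }`. -/
noncomputable def fstarChi {S : Type*} [Fintype S] (σ : ℝ) (p v : S → ℝ) : ℝ :=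
  sSup {x : ℝ | ∃ α : ℝ, 0 ≤ α ∧
    x = expect p (fun s => min (v s) α)
      - Real.sqrt (σ * varOf p (fun s => min (v s) α))}

lemma pmf_expect_le {S : Type*} [Fintype S] {p f : S → ℝ} (hp : IsPmf p) {M : ℝ}
    (hf : ∀ s, f s ≤ M) : expect p f ≤ M := by
  calc expect p f = ∑ s, p s * f s := rfl
    _ ≤ ∑ s, p s * M :=
        Finset.sum_le_sum fun s _ => mul_le_mul_of_nonneg_left (hf s) (hp.1 s)
    _ = M := by rw [← Finset.sum_mul, hp.2, one_mul]

lemma pmf_expect_nonneg {S : Type*} [Fintype S] {p f : S → ℝ} (hp : IsPmf p)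
    (hf : ∀ s, 0 ≤ f s) : 0 ≤ expect p f :=
  Finset.sum_nonneg fun s _ => mul_nonneg (hp.1 s) (hf s)

lemma pmf_sqrt_var_le {S : Type*} [Fintype S] {p f : S → ℝ} (hp : IsPmf p) {M : ℝ}
    (hM : 0 ≤ M) (hfM : ∀ s, |f s| ≤ M) : Real.sqrt (varOf p f) ≤ M := by
  have h1 : expect p (fun s => f s ^ 2) ≤ M ^ 2 :=
    pmf_expect_le hp fun s => by
      calc f s ^ 2 = |f s| ^ 2 := (sq_abs _).symm
        _ ≤ M ^ 2 := pow_le_pow_left₀ (abs_nonneg _) (hfM s) 2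
  have h2 : varOf p f ≤ M ^ 2 := by
    have := sq_nonneg (expect p f)
    unfold varOf; linarith
  calc Real.sqrt (varOf p f) ≤ Real.sqrt (M ^ 2) := Real.sqrt_le_sqrt h2
    _ = M := by rw [Real.sqrt_sq hM]

/-- Stability of the chi-square dual value. -/
theorem fstarChi_stability
    {S : Type*} [Fintype S] [Nonempty S]
    (p q : S → ℝ) (hp : IsPmf p) (hq : IsPmf q)
    (v : S → ℝ) (hv : ∀ s, 0 ≤ v s)
    (σ : ℝ) (hσ : 0 ≤ σ) :
    |fstarChi σ q v - fstarChi σ p v| ≤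
      sSup {x : ℝ | ∃ α : ℝ, 0 ≤ α ∧ α ≤ (⨆ s, v s) ∧
          x = |expect q (fun s => min (v s) α) - expect p (fun s => min (v s) α)|}
      + Real.sqrt σ *
        sSup {x : ℝ | ∃ α : ℝ, 0 ≤ α ∧ α ≤ (⨆ s, v s) ∧
          x = |Real.sqrt (varOf q (fun s => min (v s) α))
                - Real.sqrt (varOf p (fun s => min (v s) α))|} := by
  classical
  set M : ℝ := ⨆ s, v s with hMdef
  have hbdd : BddAbove (Set.range v) := (Set.finite_range v).bddAbove
  have hvM : ∀ s, v s ≤ M := fun s => le_ciSup hbdd s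
  have hM0 : 0 ≤ M := le_trans (hv (Classical.arbitrary S)) (hvM _)
  -- basic bounds
  have hmin0 : ∀ (α : ℝ), 0 ≤ α → ∀ s, 0 ≤ min (v s) α := fun α hα s => le_min (hv s) hα
  have hminM : ∀ (α : ℝ) (s : S), min (v s) α ≤ M := fun α s =>
    le_trans (min_le_left _ _) (hvM s)
  have hminabs : ∀ (α : ℝ), 0 ≤ α → ∀ s, |min (v s) α| ≤ M := fun α hα s => by
    rw [abs_of_nonneg (hmin0 α hα s)]; exact hminM α s
  have hEbound : ∀ (r : S → ℝ), IsPmf r → ∀ (α : ℝ), 0 ≤ α →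
      0 ≤ expect r (fun s => min (v s) α) ∧ expect r (fun s => min (v s) α) ≤ M :=
    fun r hr α hα => ⟨pmf_expect_nonneg hr (hmin0 α hα), pmf_expect_le hr (hminM α)⟩
  have hVbound : ∀ (r : S → ℝ), IsPmf r → ∀ (α : ℝ), 0 ≤ α →
      Real.sqrt (varOf r (fun s => min (v s) α)) ≤ M :=
    fun r hr α hα => pmf_sqrt_var_le hr hM0 (hminabs α hα)
  -- the sets
  set T1 : Set ℝ := {x : ℝ | ∃ α : ℝ, 0 ≤ α ∧ α ≤ M ∧
      x = |expect q (fun s => min (v s) α) - expect p (fun s => min (v s) α)|} with hT1def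
  set T2 : Set ℝ := {x : ℝ | ∃ α : ℝ, 0 ≤ α ∧ α ≤ M ∧
      x = |Real.sqrt (varOf q (fun s => min (v s) α))
            - Real.sqrt (varOf p (fun s => min (v s) α))|} with hT2def
  have hT1bdd : BddAbove T1 := by
    refine ⟨M, fun x hx => ?_⟩
    obtain ⟨α, hα0, hαM, rfl⟩ := hx
    obtain ⟨hq0, hqM⟩ := hEbound q hq α hα0
    obtain ⟨hp0, hpM⟩ := hEbound p hp α hα0
    rw [abs_sub_le_iff]; constructor <;> linarith
  have hT2bdd : BddAbove T2 := by
    refine ⟨M, fun x hx => ?_⟩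
    obtain ⟨α, hα0, hαM, rfl⟩ := hx
    have hq0 := Real.sqrt_nonneg (varOf q (fun s => min (v s) α))
    have hp0 := Real.sqrt_nonneg (varOf p (fun s => min (v s) α))
    have hqM := hVbound q hq α hα0
    have hpM := hVbound p hp α hα0
    rw [abs_sub_le_iff]; constructor <;> linarith
  -- fstar sets
  have hSr : ∀ (r : S → ℝ), IsPmf r →
      ({x : ℝ | ∃ α : ℝ, 0 ≤ α ∧
        x = expect r (fun s => min (v s) α)
          - Real.sqrt (σ * varOf r (fun s => min (v s) α))}).Nonempty ∧
      BddAbove {x : ℝ | ∃ α : ℝ, 0 ≤ α ∧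
        x = expect r (fun s => min (v s) α)
          - Real.sqrt (σ * varOf r (fun s => min (v s) α))} := by
    intro r hr
    constructor
    · exact ⟨_, 0, le_refl 0, rfl⟩
    · refine ⟨M, fun x hx => ?_⟩
      obtain ⟨α, hα0, rfl⟩ := hx
      have := (hEbound r hr α hα0).2
      have := Real.sqrt_nonneg (σ * varOf r (fun s => min (v s) α))
      linarith
  -- key one-sided bound
  have key : ∀ (r r' : S → ℝ), IsPmf r → IsPmf r' →
      (∀ β : ℝ, 0 ≤ β → β ≤ M →
        |expect r (fun s => min (v s) β) - expect r' (fun s => min (v s) β)| ≤ sSup T1) →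
      (∀ β : ℝ, 0 ≤ β → β ≤ M →
        |Real.sqrt (varOf r (fun s => min (v s) β))
          - Real.sqrt (varOf r' (fun s => min (v s) β))| ≤ sSup T2) →
      fstarChi σ r v ≤ fstarChi σ r' v + sSup T1 + Real.sqrt σ * sSup T2 := by
    intro r r' hr hr' hA hB
    apply csSup_le (hSr r hr).1
    rintro x ⟨α, hα0, rfl⟩
    set β := min α M with hβdef
    have hβ0 : 0 ≤ β := le_min hα0 hM0
    have hβM : β ≤ M := min_le_right _ _
    have hfun : (fun s => min (v s) α) = (fun s => min (v s) β) := by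
      funext s
      rw [hβdef, ← min_assoc]
      exact (min_eq_left (le_trans (min_le_left _ _) (hvM s))).symm
    rw [hfun]
    have h1 : expect r' (fun s => min (v s) β)
        - Real.sqrt (σ * varOf r' (fun s => min (v s) β)) ≤ fstarChi σ r' v :=
      le_csSup (hSr r' hr').2 ⟨β, hβ0, rfl⟩
    have h2 := hA β hβ0 hβM
    have h3 := hB β hβ0 hβM
    simp only [Real.sqrt_mul hσ] at h1 ⊢
    have hsσ : 0 ≤ Real.sqrt σ := Real.sqrt_nonneg σ
    have h4 : expect r (fun s => min (v s) β) - expect r' (fun s => min (v s) β)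
        ≤ sSup T1 := le_trans (le_abs_self _) h2
    have h5 : Real.sqrt σ * (Real.sqrt (varOf r' (fun s => min (v s) β))
        - Real.sqrt (varOf r (fun s => min (v s) β))) ≤ Real.sqrt σ * sSup T2 := by
      apply mul_le_mul_of_nonneg_left _ hsσ
      exact le_trans (le_trans (le_abs_self _) (by rw [abs_sub_comm])) h3
    have h6 : Real.sqrt σ * (Real.sqrt (varOf r' (fun s => min (v s) β))
        - Real.sqrt (varOf r (fun s => min (v s) β)))
        = Real.sqrt σ * Real.sqrt (varOf r' (fun s => min (v s) β))
        - Real.sqrt σ * Real.sqrt (varOf r (fun s => min (v s) β)) := by ring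
    linarith [h5, h6.le, h6.ge]
  -- conclude
  have hAqp : ∀ β : ℝ, 0 ≤ β → β ≤ M →
      |expect q (fun s => min (v s) β) - expect p (fun s => min (v s) β)| ≤ sSup T1 :=
    fun β h0 hM => le_csSup hT1bdd ⟨β, h0, hM, rfl⟩
  have hApq : ∀ β : ℝ, 0 ≤ β → β ≤ M →
      |expect p (fun s => min (v s) β) - expect q (fun s => min (v s) β)| ≤ sSup T1 :=
    fun β h0 hM => by rw [abs_sub_comm]; exact hAqp β h0 hM
  have hBqp : ∀ β : ℝ, 0 ≤ β → β ≤ M →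
      |Real.sqrt (varOf q (fun s => min (v s) β))
        - Real.sqrt (varOf p (fun s => min (v s) β))| ≤ sSup T2 :=
    fun β h0 hM => le_csSup hT2bdd ⟨β, h0, hM, rfl⟩
  have hBpq : ∀ β : ℝ, 0 ≤ β → β ≤ M →
      |Real.sqrt (varOf p (fun s => min (v s) β))
        - Real.sqrt (varOf q (fun s => min (v s) β))| ≤ sSup T2 :=
    fun β h0 hM => by rw [abs_sub_comm]; exact hBqp β h0 hM
  have k1 := key q p hq hp hAqp hBqp
  have k2 := key p q hp hq hApq hBpq
  rw [abs_sub_le_iff]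
  constructor <;> linarith
end

section
/- Stability of the KL dual value under relative perturbation of the kernel: Let S be a finite nonempty set, let p and q be pmfs on S with q(s) = 0 whenever p(s) = 0, let B > 0, let v : S → ℝ with 0 ≤ v(s) ≤ B for all s, and let σ > 0. Set ε = max_{s : p(s) > 0} |q(s) − p(s)|/p(s) and suppose ε ≤ 1/2. Then | f*_KL(q, v) − f*_KL(p, v) | ≤ (2B/σ) · ε. -/
open Finset

/-- The KL dual value with uncertainty level `σ`:
`f*_KL(p, v) = sup_{α > 0} { −α·log(E_p[exp(−v/α)]) − α·σ }`. -/
noncomputable def fstarKL {S : Type*} [Fintype S] (σ : ℝ) (p v : S → ℝ) : ℝ :=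
  sSup {x : ℝ | ∃ α : ℝ, 0 < α ∧
    x = -α * Real.log (expect p (fun s => Real.exp (-(v s) / α))) - α * σ}

section Aux

variable {S : Type*} [Fintype S] [Nonempty S]

lemma exists_pos_of_pmf (p : S → ℝ) (hp : IsPmf p) : ∃ s, 0 < p s := by
  by_contra h
  push_neg at h
  have h0 : ∑ s, p s = 0 := Finset.sum_eq_zero fun s _ => le_antisymm (h s) (hp.1 s)
  rw [hp.2] at h0; norm_num at h0

lemma expect_pos_aux (p : S → ℝ) (hp : IsPmf p) (f : S → ℝ) (hf : ∀ s, 0 < f s) :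
    0 < expect p f := by
  obtain ⟨s0, hs0⟩ := exists_pos_of_pmf p hp
  exact Finset.sum_pos' (fun s _ => mul_nonneg (hp.1 s) (hf s).le)
    ⟨s0, Finset.mem_univ s0, mul_pos hs0 (hf s0)⟩

lemma expect_le_one_aux (p : S → ℝ) (hp : IsPmf p) (f : S → ℝ) (hf : ∀ s, f s ≤ 1) :
    expect p f ≤ 1 := by
  have h : expect p f ≤ ∑ s, p s :=
    Finset.sum_le_sum fun s _ => mul_le_of_le_one_right (hp.1 s) (hf s)
  rw [hp.2] at h; exact h

lemma expect_exp_lower (p : S → ℝ) (hp : IsPmf p) (B : ℝ)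
    (v : S → ℝ) (hv : ∀ s, 0 ≤ v s ∧ v s ≤ B) (α : ℝ) (hα : 0 < α) :
    Real.exp (-B / α) ≤ expect p (fun s => Real.exp (-(v s) / α)) := by
  have : ∑ s, p s * Real.exp (-B / α) = Real.exp (-B / α) := by
    rw [← Finset.sum_mul, hp.2, one_mul]
  rw [← this]
  refine Finset.sum_le_sum fun s _ => ?_
  refine mul_le_mul_of_nonneg_left ?_ (hp.1 s)
  apply Real.exp_le_exp.mpr
  exact (div_le_div_iff_of_pos_right hα).mpr (by linarith [(hv s).2])

lemma log_expect_le_zero (p : S → ℝ) (hp : IsPmf p) (v : S → ℝ)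
    (hv0 : ∀ s, 0 ≤ v s) (α : ℝ) (hα : 0 < α) :
    Real.log (expect p (fun s => Real.exp (-(v s) / α))) ≤ 0 := by
  apply Real.log_nonpos (expect_pos_aux p hp _ (fun s => Real.exp_pos _)).le
  apply expect_le_one_aux p hp
  intro s
  rw [← Real.exp_zero]
  apply Real.exp_le_exp.mpr
  have := hv0 s
  have : -(v s) / α ≤ 0 := div_nonpos_of_nonpos_of_nonneg (by linarith) hα.le
  linarith

lemma neg_log_expect_le_B (p : S → ℝ) (hp : IsPmf p) (B : ℝ)
    (v : S → ℝ) (hv : ∀ s, 0 ≤ v s ∧ v s ≤ B) (α : ℝ) (hα : 0 < α) :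
    -α * Real.log (expect p (fun s => Real.exp (-(v s) / α))) ≤ B := by
  have hEpos : 0 < expect p (fun s => Real.exp (-(v s) / α)) :=
    expect_pos_aux p hp _ (fun s => Real.exp_pos _)
  have hlog : -B / α ≤ Real.log (expect p (fun s => Real.exp (-(v s) / α))) :=
    (Real.le_log_iff_exp_le hEpos).mpr (expect_exp_lower p hp B v hv α hα)
  have h1 : -(B / α) * α ≤ Real.log (expect p (fun s => Real.exp (-(v s) / α))) * α := by
    apply mul_le_mul_of_nonneg_right _ hα.le
    rw [← neg_div]; exact hlog
  have h2 : -(B / α) * α = -B := by field_simp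
  nlinarith

lemma fstar_bddAbove (σ : ℝ) (hσ : 0 < σ) (p : S → ℝ) (hp : IsPmf p) (B : ℝ)
    (v : S → ℝ) (hv : ∀ s, 0 ≤ v s ∧ v s ≤ B) :
    BddAbove {x : ℝ | ∃ α : ℝ, 0 < α ∧
      x = -α * Real.log (expect p (fun s => Real.exp (-(v s) / α))) - α * σ} := by
  refine ⟨B, ?_⟩
  rintro x ⟨α, hα, rfl⟩
  have h1 := neg_log_expect_le_B p hp B v hv α hα
  nlinarith [mul_pos hα hσ]

lemma fstar_nonneg (σ : ℝ) (hσ : 0 < σ) (p : S → ℝ) (hp : IsPmf p) (B : ℝ)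
    (v : S → ℝ) (hv : ∀ s, 0 ≤ v s ∧ v s ≤ B) :
    0 ≤ fstarKL σ p v := by
  have hbdd := fstar_bddAbove σ hσ p hp B v hv
  have key : ∀ α : ℝ, 0 < α → -α * σ ≤ fstarKL σ p v := by
    intro α hα
    have hmem : -α * Real.log (expect p (fun s => Real.exp (-(v s) / α))) - α * σ ∈
        {x : ℝ | ∃ α : ℝ, 0 < α ∧
          x = -α * Real.log (expect p (fun s => Real.exp (-(v s) / α))) - α * σ} :=
      ⟨α, hα, rfl⟩
    have h1 := le_csSup hbdd hmem
    have h2 := log_expect_le_zero p hp v (fun s => (hv s).1) α hα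
    have : 0 ≤ -α * Real.log (expect p (fun s => Real.exp (-(v s) / α))) := by nlinarith
    unfold fstarKL
    linarith
  by_contra hneg
  push_neg at hneg
  have hα : 0 < -fstarKL σ p v / (2 * σ) := div_pos (by linarith) (by linarith)
  have := key _ hα
  have heq : -(-fstarKL σ p v / (2 * σ)) * σ = fstarKL σ p v / 2 := by
    field_simp
  rw [heq] at this
  linarith

lemma fstar_le_fstar (σ B ε : ℝ) (hσ : 0 < σ) (hB : 0 < B) (hε0 : 0 ≤ ε)
    (p q v : S → ℝ) (hp : IsPmf p) (hq : IsPmf q)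
    (hv : ∀ s, 0 ≤ v s ∧ v s ≤ B)
    (hlog : ∀ α : ℝ, 0 < α →
      Real.log (expect q (fun s => Real.exp (-(v s) / α))) -
      Real.log (expect p (fun s => Real.exp (-(v s) / α))) ≤ 2 * ε) :
    fstarKL σ p v ≤ fstarKL σ q v + 2 * B / σ * ε := by
  have hFq0 : 0 ≤ fstarKL σ q v := fstar_nonneg σ hσ q hq B v hv
  have hbddq := fstar_bddAbove σ hσ q hq B v hv
  have hterm : 0 ≤ 2 * B / σ * ε := by positivity
  unfold fstarKL
  refine csSup_le ⟨_, ⟨1, one_pos, rfl⟩⟩ ?_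
  rintro x ⟨α, hα, rfl⟩
  by_cases hcase : α ≤ B / σ
  · have h1 : -α * Real.log (expect p (fun s => Real.exp (-(v s) / α))) - α * σ ≤
        -α * Real.log (expect q (fun s => Real.exp (-(v s) / α))) - α * σ + 2 * ε * α := by
      have := hlog α hα
      nlinarith
    have h2 : -α * Real.log (expect q (fun s => Real.exp (-(v s) / α))) - α * σ ≤
        fstarKL σ q v := le_csSup hbddq ⟨α, hα, rfl⟩
    have h3 : 2 * ε * α ≤ 2 * B / σ * ε := by
      have h := mul_le_mul_of_nonneg_left ((le_div_iff₀ hσ).mp hcase) hε0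
      rw [div_mul_eq_mul_div, le_div_iff₀ hσ]
      nlinarith
    unfold fstarKL at hFq0 h2
    linarith
  · push_neg at hcase
    have h1 := neg_log_expect_le_B p hp B v hv α hα
    have h2 : B < α * σ := by
      rw [div_lt_iff₀ hσ] at hcase; linarith
    unfold fstarKL at hFq0
    linarith

end Aux

/-- Stability of the KL dual value under relative perturbation of the kernel. -/
theorem fstarKL_stability
    {S : Type*} [Fintype S] [Nonempty S]
    (p q : S → ℝ) (hp : IsPmf p) (hq : IsPmf q)
    (habs : ∀ s, p s = 0 → q s = 0)
    (B : ℝ) (hB : 0 < B)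
    (v : S → ℝ) (hv : ∀ s, 0 ≤ v s ∧ v s ≤ B)
    (σ : ℝ) (hσ : 0 < σ)
    (ε : ℝ) (hε : ε = sSup {x : ℝ | ∃ s, 0 < p s ∧ x = |q s - p s| / p s})
    (hεhalf : ε ≤ 1 / 2) :
    |fstarKL σ q v - fstarKL σ p v| ≤ (2 * B / σ) * ε := by
  obtain ⟨s0, hs0⟩ := exists_pos_of_pmf p hp
  set T := {x : ℝ | ∃ s, 0 < p s ∧ x = |q s - p s| / p s} with hT
  have hTsub : T ⊆ Set.range (fun s => |q s - p s| / p s) := by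
    rintro x ⟨s, _, rfl⟩; exact ⟨s, rfl⟩
  have hTbdd : BddAbove T := BddAbove.mono hTsub (Set.finite_range _).bddAbove
  have hε0 : 0 ≤ ε := by
    have hmem : |q s0 - p s0| / p s0 ∈ T := ⟨s0, hs0, rfl⟩
    have h1 : |q s0 - p s0| / p s0 ≤ ε := hε ▸ le_csSup hTbdd hmem
    have h2 : 0 ≤ |q s0 - p s0| / p s0 := by positivity
    linarith
  have hqp : ∀ s, |q s - p s| ≤ ε * p s := by
    intro s
    rcases eq_or_lt_of_le (hp.1 s) with h | h
    · rw [habs s h.symm, ← h]; simp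
    · have hmem : |q s - p s| / p s ∈ T := ⟨s, h, rfl⟩
      have h1 : |q s - p s| / p s ≤ ε := hε ▸ le_csSup hTbdd hmem
      rw [div_le_iff₀ h] at h1
      linarith
  have hEbound : ∀ α : ℝ, 0 < α →
      |_root_.expect q (fun s => Real.exp (-(v s) / α)) - _root_.expect p (fun s => Real.exp (-(v s) / α))|
        ≤ ε * _root_.expect p (fun s => Real.exp (-(v s) / α)) := by
    intro α hα
    have hdiff : _root_.expect q (fun s => Real.exp (-(v s) / α)) -
        _root_.expect p (fun s => Real.exp (-(v s) / α)) =
        ∑ s, (q s - p s) * Real.exp (-(v s) / α) := by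
      simp only [_root_.expect, sub_mul, Finset.sum_sub_distrib]
    rw [hdiff]
    calc |∑ s, (q s - p s) * Real.exp (-(v s) / α)|
        ≤ ∑ s, |(q s - p s) * Real.exp (-(v s) / α)| := Finset.abs_sum_le_sum_abs _ _
      _ ≤ ∑ s, ε * (p s * Real.exp (-(v s) / α)) := by
          refine Finset.sum_le_sum fun s _ => ?_
          rw [abs_mul, abs_of_pos (Real.exp_pos _), ← mul_assoc]
          exact mul_le_mul_of_nonneg_right (hqp s) (Real.exp_pos _).le
      _ = ε * _root_.expect p (fun s => Real.exp (-(v s) / α)) := by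
          rw [← Finset.mul_sum]; rfl
  have hEp : ∀ α : ℝ, 0 < α → 0 < _root_.expect p (fun s => Real.exp (-(v s) / α)) :=
    fun α _ => _root_.expect_pos_aux p hp _ (fun s => Real.exp_pos _)
  have hEq : ∀ α : ℝ, 0 < α → 0 < _root_.expect q (fun s => Real.exp (-(v s) / α)) :=
    fun α _ => _root_.expect_pos_aux q hq _ (fun s => Real.exp_pos _)
  have hlog1 : ∀ α : ℝ, 0 < α →
      Real.log (_root_.expect q (fun s => Real.exp (-(v s) / α))) -
      Real.log (_root_.expect p (fun s => Real.exp (-(v s) / α))) ≤ 2 * ε := by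
    intro α hα
    set a := _root_.expect q (fun s => Real.exp (-(v s) / α)) with ha
    set b := _root_.expect p (fun s => Real.exp (-(v s) / α)) with hb
    have hapos := hEq α hα
    have hbpos := hEp α hα
    have hab : a - b ≤ ε * b := le_trans (le_abs_self _) (hEbound α hα)
    have h1 : Real.log a - Real.log b ≤ a / b - 1 := by
      rw [← Real.log_div hapos.ne' hbpos.ne']
      exact Real.log_le_sub_one_of_pos (div_pos hapos hbpos)
    have h2 : a / b - 1 ≤ ε := by
      rw [div_sub_one hbpos.ne', div_le_iff₀ hbpos]
      linarith
    linarith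
  have hlog2 : ∀ α : ℝ, 0 < α →
      Real.log (_root_.expect p (fun s => Real.exp (-(v s) / α))) -
      Real.log (_root_.expect q (fun s => Real.exp (-(v s) / α))) ≤ 2 * ε := by
    intro α hα
    set a := _root_.expect q (fun s => Real.exp (-(v s) / α)) with ha
    set b := _root_.expect p (fun s => Real.exp (-(v s) / α)) with hb
    have hapos := hEq α hα
    have hbpos := hEp α hα
    have hab : b - a ≤ ε * b := by
      have h := hEbound α hα
      rw [abs_sub_comm] at h
      exact le_trans (le_abs_self _) h
    have hb2a : b / 2 ≤ a := by
      have hεb : ε * b ≤ (1/2) * b := mul_le_mul_of_nonneg_right hεhalf hbpos.le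
      linarith
    have h1 : Real.log b - Real.log a ≤ b / a - 1 := by
      rw [← Real.log_div hbpos.ne' hapos.ne']
      exact Real.log_le_sub_one_of_pos (div_pos hbpos hapos)
    have h2 : b / a - 1 ≤ 2 * ε := by
      rw [div_sub_one hapos.ne', div_le_iff₀ hapos]
      have : ε * b ≤ ε * (2 * a) := mul_le_mul_of_nonneg_left (by linarith) hε0
      linarith
    linarith
  have hub1 := fstar_le_fstar σ B ε hσ hB hε0 p q v hp hq hv hlog1
  have hub2 := fstar_le_fstar σ B ε hσ hB hε0 q p v hq hp hv hlog2
  rw [abs_sub_le_iff]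
  exact ⟨by linarith, by linarith⟩
end

section
/- Lipschitz continuity of truncated variance in the truncation level: Let S be a finite nonempty set, p a pmf on S, and v : S → ℝ with v(s) ≥ 0 for all s. Then for all α₁, α₂ ≥ 0, | Var_p[(v)_{α₁}] − Var_p[(v)_{α₂}] | ≤ 2·(α₁ + α₂)·|α₁ − α₂|. -/
open Finset

lemma expect_abs_le {S : Type*} [Fintype S] (p f : S → ℝ)
    (hp0 : ∀ s, 0 ≤ p s) (hp1 : ∑ s, p s = 1)
    (c : ℝ) (h : ∀ s, |f s| ≤ c) : |expect p f| ≤ c := by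
  unfold _root_.expect
  calc |∑ s, p s * f s| ≤ ∑ s, |p s * f s| := Finset.abs_sum_le_sum_abs _ _
    _ = ∑ s, p s * |f s| := by
        refine Finset.sum_congr rfl fun s _ => ?_
        rw [abs_mul, abs_of_nonneg (hp0 s)]
    _ ≤ ∑ s, p s * c := by
        refine Finset.sum_le_sum fun s _ => mul_le_mul_of_nonneg_left (h s) (hp0 s)
    _ = c := by rw [← Finset.sum_mul, hp1, one_mul]

lemma expect_sub {S : Type*} [Fintype S] (p f g : S → ℝ) :
    expect p (fun s => f s - g s) = expect p f - expect p g := by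
  unfold _root_.expect
  rw [← Finset.sum_sub_distrib]
  exact Finset.sum_congr rfl fun s _ => by ring

/-- Lipschitz continuity of the truncated variance in the truncation level. -/
theorem truncated_variance_lipschitz
    {S : Type*} [Fintype S] [Nonempty S]
    (p : S → ℝ) (hp : IsPmf p)
    (v : S → ℝ) (hv : ∀ s, 0 ≤ v s)
    (α₁ α₂ : ℝ) (hα₁ : 0 ≤ α₁) (hα₂ : 0 ≤ α₂) :
    |varOf p (fun s => min (v s) α₁) - varOf p (fun s => min (v s) α₂)| ≤
      2 * (α₁ + α₂) * |α₁ - α₂| := by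
  obtain ⟨hp0, hp1⟩ := hp
  set f : S → ℝ := fun s => min (v s) α₁ with hfdef
  set g : S → ℝ := fun s => min (v s) α₂ with hgdef
  have hfd : ∀ s, |f s - g s| ≤ |α₁ - α₂| := by
    intro s
    calc |min (v s) α₁ - min (v s) α₂| ≤ max |v s - v s| |α₁ - α₂| :=
          abs_min_sub_min_le_max _ _ _ _
      _ = |α₁ - α₂| := by simp [abs_nonneg]
  have hf0 : ∀ s, 0 ≤ f s := fun s => le_min (hv s) hα₁
  have hfb : ∀ s, f s ≤ α₁ := fun s => min_le_right _ _
  have hg0 : ∀ s, 0 ≤ g s := fun s => le_min (hv s) hα₂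
  have hgb : ∀ s, g s ≤ α₂ := fun s => min_le_right _ _
  have hE1 : |expect p f - expect p g| ≤ |α₁ - α₂| := by
    rw [← expect_sub]
    exact expect_abs_le p _ hp0 hp1 _ hfd
  have hEf0 : |expect p f| ≤ α₁ := by
    refine expect_abs_le p f hp0 hp1 _ fun s => ?_
    rw [abs_of_nonneg (hf0 s)]; exact hfb s
  have hEg0 : |expect p g| ≤ α₂ := by
    refine expect_abs_le p g hp0 hp1 _ fun s => ?_
    rw [abs_of_nonneg (hg0 s)]; exact hgb s
  have hE2 : |expect p (fun s => f s ^ 2) - expect p (fun s => g s ^ 2)| ≤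
      (α₁ + α₂) * |α₁ - α₂| := by
    rw [← expect_sub]
    refine expect_abs_le p _ hp0 hp1 _ fun s => ?_
    have : f s ^ 2 - g s ^ 2 = (f s + g s) * (f s - g s) := by ring
    rw [this, abs_mul]
    refine mul_le_mul ?_ (hfd s) (abs_nonneg _) (by positivity)
    rw [abs_of_nonneg (by linarith [hf0 s, hg0 s])]
    linarith [hfb s, hgb s]
  have hsq : |(expect p f) ^ 2 - (expect p g) ^ 2| ≤ (α₁ + α₂) * |α₁ - α₂| := by
    have : (expect p f) ^ 2 - (expect p g) ^ 2 =
        (expect p f + expect p g) * (expect p f - expect p g) := by ring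
    rw [this, abs_mul]
    refine mul_le_mul ?_ hE1 (abs_nonneg _) (by positivity)
    calc |expect p f + expect p g| ≤ |expect p f| + |expect p g| := abs_add_le _ _
      _ ≤ α₁ + α₂ := add_le_add hEf0 hEg0
  have : varOf p f - varOf p g =
      (expect p (fun s => f s ^ 2) - expect p (fun s => g s ^ 2)) -
      ((expect p f) ^ 2 - (expect p g) ^ 2) := by
    unfold varOf; ring
  rw [this]
  calc |_ - _| ≤ _ + _ := abs_sub _ _
    _ ≤ (α₁ + α₂) * |α₁ - α₂| + (α₁ + α₂) * |α₁ - α₂| := add_le_add hE2 hsq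
    _ = 2 * (α₁ + α₂) * |α₁ - α₂| := by ring
end

section
/- Uniform concentration of truncated empirical means (total-variation case): Let S be a finite nonempty set, p a pmf on S, r_max > 0, γ ∈ [0,1), and V : S → ℝ with 0 ≤ V(s) ≤ r_max/(1−γ) for all s. Let δ ∈ (0,1), let N ≥ 1 be an integer with N ≥ log(18N/δ), and let p̂_N be the empirical pmf of N i.i.d. samples from p. Then with probability at least 1 − δ, max_{0 ≤ α ≤ max_{s∈S} V(s)} | E_p[(V)_α] − E_{p̂_N}[(V)_α] | ≤ 3·r_max·sqrt( log(18N/δ) / ((1−γ)²·N) ). -/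
/-!
Write `M = r_max / (1 - γ)`, `L = log (18N/δ)` and `σ = √(L/N)`. For a fixed truncation level `β`,
`E_{p̂_N}[(V)_β]` is the mean of `N` independent samples of `(V)_β(X)` with values in `[0, M]`, so by
Hoeffding's inequality it deviates from `E_p[(V)_β]` by at least `2Mσ` with probability at most
`2 e^{-8L} ≤ δ / (9N)`. A union bound over the `8N + 1` levels `β = k M / (8N)` costs at most `δ`.
Since `α ↦ E_q[(V)_α]` is `1`-Lipschitz for every pmf `q`, passing from the nearest level below `α`
to `α` adds at most `2 · M / (8N) ≤ Mσ`.
-/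

open Finset MeasureTheory ProbabilityTheory

open scoped NNReal ENNReal

noncomputable def truncMean {S : Type*} [Fintype S] (q V : S → ℝ) (α : ℝ) : ℝ :=
  ∑ s, q s * min (V s) α

noncomputable def empiricalPmf {S : Type*} [DecidableEq S] {N : ℕ} (x : Fin N → S) (s : S) : ℝ :=
  (#{i | x i = s} : ℝ) / N

theorem sum_empiricalPmf_mul {S : Type*} [Fintype S] [DecidableEq S] {N : ℕ} (x : Fin N → S)
    (F : S → ℝ) : ∑ s, empiricalPmf x s * F s = (∑ i, F (x i)) / N := by
  rw [← sum_fiberwise univ x (fun i => F (x i)), sum_div]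
  refine sum_congr rfl fun s _ => ?_
  rw [sum_congr rfl fun i hi => congrArg F (mem_filter.1 hi).2, sum_const, nsmul_eq_mul,
    empiricalPmf]
  ring

theorem isPmf_empiricalPmf {S : Type*} [Fintype S] [DecidableEq S] {N : ℕ} (hN : N ≠ 0)
    (x : Fin N → S) : IsPmf (empiricalPmf x) := by
  refine ⟨fun s => by unfold empiricalPmf; positivity, ?_⟩
  simpa [hN] using sum_empiricalPmf_mul x 1

theorem IsPmf.lipschitzWith_truncMean {S : Type*} [Fintype S] {q : S → ℝ} (hq : IsPmf q)
    (V : S → ℝ) : LipschitzWith 1 (truncMean q V) := by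
  refine LipschitzWith.of_dist_le_mul fun α β => ?_
  rw [NNReal.coe_one, one_mul, Real.dist_eq, Real.dist_eq, truncMean, truncMean,
    ← sum_sub_distrib]
  calc |∑ s, (q s * min (V s) α - q s * min (V s) β)|
      ≤ ∑ s, q s * |α - β| := by
        refine (abs_sum_le_sum_abs _ _).trans (sum_le_sum fun s _ => ?_)
        rw [← mul_sub, abs_mul, abs_of_nonneg (hq.1 s)]
        exact mul_le_mul_of_nonneg_left
          (by simpa using abs_min_sub_min_le_max (V s) α (V s) β) (hq.1 s)
    _ = |α - β| := by rw [← sum_mul, hq.2, one_mul]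

theorem LipschitzWith.abs_le_add_of_abs_le_nat_mul {g : ℝ → ℝ} {K : ℝ≥0} (hg : LipschitzWith K g)
    {c ε : ℝ} (hc : 0 < c) {n : ℕ} (hgrid : ∀ k ≤ n, |g (k * c)| ≤ ε) {α : ℝ} (hα₀ : 0 ≤ α)
    (hα : α ≤ n * c) : |g α| ≤ ε + K * c := by
  set k := ⌊α / c⌋₊
  have hkn : k ≤ n := Nat.floor_le_of_le ((div_le_iff₀ hc).2 hα)
  have hk_le : k * c ≤ α := (le_div_iff₀ hc).1 (Nat.floor_le (div_nonneg hα₀ hc.le))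
  have hk_lt : α < (k + 1) * c := (div_lt_iff₀ hc).1 (Nat.lt_floor_add_one _)
  calc |g α| ≤ |g (k * c)| + |g α - g (k * c)| := by
        linarith [abs_sub_abs_le_abs_sub (g α) (g (k * c))]
    _ ≤ ε + K * |α - k * c| := by
        gcongr
        · exact hgrid k hkn
        · simpa [Real.dist_eq] using hg.dist_le_mul α (k * c)
    _ ≤ ε + K * c := by
        gcongr
        rw [abs_of_nonneg (by linarith)]
        linarith

theorem IsPmf.abs_truncMean_sub_le_of_grid {S : Type*} [Fintype S] {p q : S → ℝ} (hp : IsPmf p)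
    (hq : IsPmf q) (V : S → ℝ) {c ε : ℝ} (hc : 0 < c) {n : ℕ}
    (hgrid : ∀ k ≤ n, |truncMean p V (k * c) - truncMean q V (k * c)| ≤ ε) {α : ℝ}
    (hα₀ : 0 ≤ α) (hα : α ≤ n * c) : |truncMean p V α - truncMean q V α| ≤ ε + 2 * c := by
  simpa [one_add_one_eq_two] using ((hp.lipschitzWith_truncMean V).sub
    (hq.lipschitzWith_truncMean V)).abs_le_add_of_abs_le_nat_mul hc hgrid hα₀ hα

theorem one_sub_le_prob_compl_of_prob_le {Ω : Type*} [MeasurableSpace Ω] {μ : Measure Ω}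
    [IsProbabilityMeasure μ] {s : Set Ω} {a : ℝ≥0∞} (h : μ s ≤ a) : 1 - a ≤ μ sᶜ := by
  rw [tsub_le_iff_right, ← measure_univ (μ := μ), ← Set.compl_union_self s]
  exact (measure_union_le sᶜ s).trans (by gcongr)

theorem integral_comp_eq_sum_mul {Ω S : Type*} [MeasurableSpace Ω] {μ : Measure Ω}
    [IsFiniteMeasure μ] [Fintype S] [MeasurableSpace S] [MeasurableSingletonClass S]
    {X : Ω → S} (hX : Measurable X) {p : S → ℝ} (hp : ∀ s, 0 ≤ p s)
    (hlaw : ∀ s, μ (X ⁻¹' {s}) = ENNReal.ofReal (p s)) (F : S → ℝ) :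
    ∫ ω, F (X ω) ∂μ = ∑ s, p s * F s := by
  rw [← integral_map hX.aemeasurable (measurable_of_countable F).aestronglyMeasurable,
    integral_fintype Integrable.of_finite]
  refine sum_congr rfl fun s _ => ?_
  rw [smul_eq_mul, measureReal_def, Measure.map_apply hX (measurableSet_singleton s), hlaw,
    ENNReal.toReal_ofReal (hp s)]

section Concentration

variable {Ω : Type*} [MeasurableSpace Ω] {μ : Measure Ω} [IsProbabilityMeasure μ]

theorem measureReal_le_abs_sum_sub_integral_le {ι : Type*} [Fintype ι] {Y : ι → Ω → ℝ}
    (hY : ∀ i, Measurable (Y i)) (hindep : iIndepFun Y μ) {a b : ℝ}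
    (hab : ∀ i ω, Y i ω ∈ Set.Icc a b) {ε : ℝ} (hε : 0 ≤ ε) :
    μ.real {ω | ε ≤ |∑ i, (Y i ω - μ[Y i])|}
      ≤ 2 * Real.exp (-2 * ε ^ 2 / (Fintype.card ι * (b - a) ^ 2)) := by
  set m : ι → ℝ := fun i => μ[Y i]
  set Z : ι → Ω → ℝ := fun i ω => Y i ω - m i
  have hZ : ∀ i, HasSubgaussianMGF (Z i) ((‖b - a‖₊ / 2) ^ 2) μ := fun i =>
    hasSubgaussianMGF_of_mem_Icc (hY i).aemeasurable (ae_of_all _ (hab i))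
  have hZindep : iIndepFun Z μ :=
    hindep.comp (fun i x => x - m i) (fun i => measurable_sub_const (m i))
  have hnegindep : iIndepFun (fun i => -Z i) μ :=
    hZindep.comp (fun _ x => -x) (fun _ => measurable_neg)
  have hexponent : -ε ^ 2 / (2 * ∑ _i : ι, ((‖b - a‖₊ / 2) ^ 2 : ℝ≥0))
      = -2 * ε ^ 2 / (Fintype.card ι * (b - a) ^ 2) := by
    push_cast
    rw [sum_const, card_univ, nsmul_eq_mul, Real.norm_eq_abs, div_pow, sq_abs]
    generalize (b - a) ^ 2 = d
    ring
  have hupper := HasSubgaussianMGF.measure_sum_ge_le_of_iIndepFun hZindep (s := univ)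
    (fun i _ => hZ i) hε
  have hlower := HasSubgaussianMGF.measure_sum_ge_le_of_iIndepFun hnegindep (s := univ)
    (fun i _ => (hZ i).neg) hε
  rw [hexponent] at hupper hlower
  have hsplit : {ω | ε ≤ |∑ i, Z i ω|} ⊆ {ω | ε ≤ ∑ i, Z i ω} ∪ {ω | ε ≤ ∑ i, (-Z i) ω} := by
    intro ω hω
    simp only [Set.mem_ofPred_eq, Set.mem_union, Pi.neg_apply, sum_neg_distrib] at hω ⊢
    exact (le_abs'.1 hω).symm.imp_right le_neg_of_le_neg
  calc μ.real {ω | ε ≤ |∑ i, Z i ω|}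
      ≤ μ.real {ω | ε ≤ ∑ i, Z i ω} + μ.real {ω | ε ≤ ∑ i, (-Z i) ω} :=
        (measureReal_mono hsplit).trans (measureReal_union_le _ _)
    _ ≤ _ := by linarith [hupper, hlower]

variable {S : Type*} [Fintype S] [DecidableEq S] [MeasurableSpace S] [MeasurableSingletonClass S]
  {p : S → ℝ} {N : ℕ} {X : Fin N → Ω → S}

theorem measure_le_abs_sum_mul_sub_sum_empiricalPmf_mul_le (hp : ∀ s, 0 ≤ p s) (hN : N ≠ 0)
    (hX : ∀ i, Measurable (X i)) (hindep : iIndepFun X μ)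
    (hlaw : ∀ i s, μ (X i ⁻¹' {s}) = ENNReal.ofReal (p s))
    {F : S → ℝ} {M : ℝ} (hF : ∀ s, F s ∈ Set.Icc 0 M) {ε : ℝ} (hε : 0 ≤ ε) :
    μ {ω | ε ≤ |∑ s, p s * F s - ∑ s, empiricalPmf (X · ω) s * F s|}
      ≤ ENNReal.ofReal (2 * Real.exp (-2 * N * ε ^ 2 / M ^ 2)) := by
  have hmean : ∀ i, μ[fun ω => F (X i ω)] = ∑ s, p s * F s := fun i =>
    integral_comp_eq_sum_mul (hX i) hp (hlaw i) F
  have hsum : ∀ ω, |∑ i, (F (X i ω) - μ[fun ω => F (X i ω)])|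
      = N * |∑ s, p s * F s - ∑ s, empiricalPmf (X · ω) s * F s| := fun ω => by
    rw [← Nat.abs_cast, ← abs_mul, ← abs_neg, sum_empiricalPmf_mul]
    simp only [hmean, sum_sub_distrib, sum_const, card_univ, Fintype.card_fin, nsmul_eq_mul]
    field_simp
    rw [neg_sub]
  have hHoeffding := measureReal_le_abs_sum_sub_integral_le (μ := μ) (Y := fun i ω => F (X i ω))
    (fun i => (measurable_of_countable F).comp (hX i))
    (hindep.comp (fun _ => F) (fun _ => measurable_of_countable F))
    (fun i ω => hF (X i ω)) (mul_nonneg (Nat.cast_nonneg N) hε)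
  simp only [hsum, Fintype.card_fin, sub_zero] at hHoeffding
  rw [← ofReal_measureReal]
  refine ENNReal.ofReal_le_ofReal (le_of_eq_of_le ?_ (hHoeffding.trans_eq ?_))
  · congr with ω
    exact (mul_le_mul_iff_right₀ (by positivity)).symm
  · congr 2
    field_simp

theorem measure_biUnion_le_abs_truncMean_sub_truncMean_empiricalPmf_le (hp : ∀ s, 0 ≤ p s)
    (hN : N ≠ 0) (hX : ∀ i, Measurable (X i)) (hindep : iIndepFun X μ)
    (hlaw : ∀ i s, μ (X i ⁻¹' {s}) = ENNReal.ofReal (p s))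
    {V : S → ℝ} {M : ℝ} (hV : ∀ s, V s ∈ Set.Icc 0 M) {c : ℝ} (hc : 0 ≤ c) (n : ℕ)
    {ε : ℝ} (hε : 0 ≤ ε) :
    μ (⋃ k ∈ range (n + 1), {ω | ε ≤ |truncMean p V (k * c)
        - truncMean (empiricalPmf (X · ω)) V (k * c)|})
      ≤ ENNReal.ofReal ((n + 1) * (2 * Real.exp (-2 * N * ε ^ 2 / M ^ 2))) := by
  refine (measure_biUnion_finset_le _ _).trans ?_
  calc _ ≤ ∑ _k ∈ range (n + 1), ENNReal.ofReal (2 * Real.exp (-2 * N * ε ^ 2 / M ^ 2)) :=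
        sum_le_sum fun k _ => measure_le_abs_sum_mul_sub_sum_empiricalPmf_mul_le hp hN hX hindep
          hlaw (fun s => ⟨le_min (hV s).1 (by positivity), (min_le_left _ _).trans (hV s).2⟩) hε
    _ = _ := by rw [sum_const, card_range, ← ENNReal.ofReal_nsmul, nsmul_eq_mul, Nat.cast_succ]

end Concentration

theorem one_le_log_eighteen_mul_div {N δ : ℝ} (hN : 1 ≤ N) (hδ₀ : 0 < δ) (hδ₁ : δ < 1) :
    1 ≤ Real.log (18 * N / δ) := by
  rw [Real.le_log_iff_exp_le (by positivity), le_div_iff₀ hδ₀]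
  nlinarith [Real.exp_one_lt_three]

theorem one_div_le_sqrt_log_eighteen_mul_div {N δ : ℝ} (hN : 1 ≤ N) (hδ₀ : 0 < δ) (hδ₁ : δ < 1) :
    1 / N ≤ Real.sqrt (Real.log (18 * N / δ) / N) := by
  refine Real.le_sqrt_of_sq_le ?_
  rw [div_pow, one_pow, div_le_div_iff₀ (by positivity) (by positivity)]
  nlinarith [one_le_log_eighteen_mul_div hN hδ₀ hδ₁]

theorem eight_mul_add_one_mul_hoeffding_tail_le {N δ M : ℝ} (hN : 1 ≤ N) (hδ₀ : 0 < δ)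
    (hδ₁ : δ < 1) (hM : M ≠ 0) :
    (8 * N + 1) * (2 * Real.exp (-2 * N * (2 * M * Real.sqrt (Real.log (18 * N / δ) / N)) ^ 2
      / M ^ 2)) ≤ δ := by
  have hL := one_le_log_eighteen_mul_div hN hδ₀ hδ₁
  have hexponent : -2 * N * (2 * M * Real.sqrt (Real.log (18 * N / δ) / N)) ^ 2 / M ^ 2
      = -8 * Real.log (18 * N / δ) := by
    rw [mul_pow, Real.sq_sqrt (by positivity)]
    field_simp
    ring
  calc (8 * N + 1) * (2 * Real.exp (-2 * N * (2 * M * Real.sqrt (Real.log (18 * N / δ) / N)) ^ 2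
        / M ^ 2))
      ≤ (8 * N + 1) * (2 * Real.exp (-Real.log (18 * N / δ))) := by
        rw [hexponent]
        gcongr
        linarith
    _ = (8 * N + 1) / (9 * N) * δ := by
        rw [Real.exp_neg, Real.exp_log (by positivity), inv_div]
        field_simp
        ring
    _ ≤ δ := by
        refine mul_le_of_le_one_left hδ₀.le ((div_le_one (by positivity)).2 ?_)
        linarith

theorem tv_uniform_concentration_general
    {S : Type*} [Fintype S] [DecidableEq S]
    [MeasurableSpace S] [MeasurableSingletonClass S]
    {Ω : Type*} [MeasurableSpace Ω] (μ : Measure Ω) [IsProbabilityMeasure μ]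
    (p : S → ℝ) (hp : IsPmf p)
    (rmax : ℝ) (hrmax : 0 < rmax)
    (γ : ℝ) (hγ1 : γ < 1)
    (V : S → ℝ) (hV : ∀ s, 0 ≤ V s ∧ V s ≤ rmax / (1 - γ))
    (δ : ℝ) (hδ0 : 0 < δ) (hδ1 : δ < 1)
    (N : ℕ) (hN1 : 1 ≤ N)
    (X : Fin N → Ω → S) (hXmeas : ∀ i, Measurable (X i))
    (hXiid : iIndepFun X μ)
    (hXlaw : ∀ i s, μ (X i ⁻¹' {s}) = ENNReal.ofReal (p s)) :
    ENNReal.ofReal (1 - δ) ≤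
      μ {ω | ∀ α : ℝ, 0 ≤ α → α ≤ (⨆ s, V s) →
          |(∑ s, p s * min (V s) α)
            - ∑ s, ((((Finset.univ.filter (fun i => X i ω = s)).card : ℝ) / N)
                * min (V s) α)|
          ≤ 3 * rmax * Real.sqrt (Real.log (18 * N / δ) / ((1 - γ) ^ 2 * N))} := by
  set M := rmax / (1 - γ)
  have hM : 0 < M := div_pos hrmax (sub_pos.2 hγ1)
  have hN : (1 : ℝ) ≤ N := Nat.one_le_cast.2 hN1
  set σ := Real.sqrt (Real.log (18 * N / δ) / N)
  have hσ : 1 / N ≤ σ := one_div_le_sqrt_log_eighteen_mul_div hN hδ0 hδ1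
  have hrhs : 3 * rmax * Real.sqrt (Real.log (18 * N / δ) / ((1 - γ) ^ 2 * N)) = 3 * M * σ := by
    rw [mul_comm ((1 - γ) ^ 2), ← div_div, Real.sqrt_div' _ (sq_nonneg _),
      Real.sqrt_sq (sub_pos.2 hγ1).le]
    ring
  set c := M / (8 * N)
  have hc : 2 * c ≤ M * σ := by
    have hc_eq : 2 * c = M * (1 / N) / 4 := by simp only [c]; ring
    linarith [mul_le_mul_of_nonneg_left hσ hM.le, (by positivity : 0 ≤ M * (1 / N))]
  have hunion := measure_biUnion_le_abs_truncMean_sub_truncMean_empiricalPmf_le hp.1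
    (by omega) hXmeas hXiid hXlaw hV (by positivity : 0 ≤ c) (8 * N)
    (by positivity : 0 ≤ 2 * M * σ)
  have hgood : (⋃ k ∈ range (8 * N + 1), {ω | 2 * M * σ ≤ |truncMean p V (k * c)
      - truncMean (empiricalPmf (X · ω)) V (k * c)|})ᶜ ⊆ {ω | ∀ α : ℝ, 0 ≤ α →
        α ≤ (⨆ s, V s) → |truncMean p V α - truncMean (empiricalPmf (X · ω)) V α| ≤ 3 * M * σ} := by
    intro ω hω α hα₀ hα
    simp only [Set.mem_compl_iff, Set.mem_iUnion, mem_range, Set.mem_ofPred_eq, not_exists,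
      not_le] at hω
    have hαM : α ≤ (8 * N : ℕ) * c := by
      refine hα.trans ((Real.iSup_le (fun s => (hV s).2) hM.le).trans_eq ?_)
      push_cast
      exact (mul_div_cancel₀ M (by positivity)).symm
    calc _ ≤ 2 * M * σ + 2 * c := hp.abs_truncMean_sub_le_of_grid
          (isPmf_empiricalPmf (by omega) _) V (by positivity) (fun k hk => (hω k (by omega)).le)
          hα₀ hαM
      _ ≤ 3 * M * σ := by linarith
  have hfail := eight_mul_add_one_mul_hoeffding_tail_le hN hδ0 hδ1 hM.ne'
  push_cast at hunion
  rw [hrhs, ENNReal.ofReal_sub _ hδ0.le, ENNReal.ofReal_one]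
  -- `truncMean` and `empiricalPmf` unfold to the sums written out in the statement.
  exact (one_sub_le_prob_compl_of_prob_le (hunion.trans (ENNReal.ofReal_le_ofReal hfail))).trans
    (measure_mono hgood)

/-- Uniform concentration of truncated empirical means (total-variation case). -/
theorem tv_uniform_concentration
    {S : Type*} [Fintype S] [Nonempty S] [DecidableEq S]
    [MeasurableSpace S] [MeasurableSingletonClass S]
    {Ω : Type*} [MeasurableSpace Ω] (μ : Measure Ω) [IsProbabilityMeasure μ]
    (p : S → ℝ) (hp : IsPmf p)
    (rmax : ℝ) (hrmax : 0 < rmax)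
    (γ : ℝ) (hγ0 : 0 ≤ γ) (hγ1 : γ < 1)
    (V : S → ℝ) (hV : ∀ s, 0 ≤ V s ∧ V s ≤ rmax / (1 - γ))
    (δ : ℝ) (hδ0 : 0 < δ) (hδ1 : δ < 1)
    (N : ℕ) (hN1 : 1 ≤ N) (hNlog : Real.log (18 * N / δ) ≤ N)
    (X : Fin N → Ω → S) (hXmeas : ∀ i, Measurable (X i))
    (hXiid : iIndepFun X μ)
    (hXlaw : ∀ i s, μ (X i ⁻¹' {s}) = ENNReal.ofReal (p s)) :
    ENNReal.ofReal (1 - δ) ≤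
      μ {ω | ∀ α : ℝ, 0 ≤ α → α ≤ (⨆ s, V s) →
          |(∑ s, p s * min (V s) α)
            - ∑ s, ((((Finset.univ.filter (fun i => X i ω = s)).card : ℝ) / N)
                * min (V s) α)|
          ≤ 3 * rmax * Real.sqrt (Real.log (18 * N / δ) / ((1 - γ) ^ 2 * N))} :=
  tv_uniform_concentration_general μ p hp rmax hrmax γ hγ1 V hV δ hδ0 hδ1 N hN1 X hXmeas hXiid hXlaw
end

section
/- Second-moment bound on the multi-level Monte Carlo increment (total-variation case): Let S be a finite nonempty set, p a pmf on S, σ ≥ 0, r_max > 0, γ ∈ [0,1), and V : S → ℝ with 0 ≤ V(s) ≤ r_max/(1−γ) for all s. Let n ∈ ℕ satisfy 2^n ≥ (2n+1)·log 2 + log 18, and let X_1, …, X_{2^{n+1}} be i.i.d. samples from p. Let p̂ be the empirical pmf of all 2^{n+1} samples, p̂^E the empirical pmf of the 2^n even-indexed samples X_2, X_4, …, X_{2^{n+1}}, and p̂^O the empirical pmf of the 2^n odd-indexed samples X_1, X_3, …, X_{2^{n+1}−1}. Set δ = f*_TV(p̂, V) − (1/2)·f*_TV(p̂^E, V) − (1/2)·f*_TV(p̂^O,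 V) and C_n = 3·sqrt( (2n+1)·log 2 + log 18 ). Then E[δ²] ≤ 3·(C_n² + 1)·(r_max/(1−γ))²·2^{−n}. -/
open Finset MeasureTheory ProbabilityTheory

/-- The total-variation dual value with uncertainty level `σ`:
`f*_TV(p, v) = sup_{α ≥ 0} { E_p[(v)_α] − σ·(α − min_s v(s)) }`. -/
noncomputable def fstarTV {S : Type*} [Fintype S] (σ : ℝ) (p v : S → ℝ) : ℝ :=
  sSup {x : ℝ | ∃ α : ℝ, 0 ≤ α ∧
    x = (∑ s, p s * min (v s) α) - σ * (α - ⨅ s, v s)}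

/-! The dual objective `α ↦ E_q[(V)_α] - σ (α - min V)` is affine in `q`, so `f*_TV` is convex in
`q` and moves by at most `sup_α |E_q[(V)_α] - E_q'[(V)_α]|` when `q` moves to `q'`. As `p̂` is the
midpoint of `p̂ᴱ` and `p̂ᴼ`, this gives `|δ| ≤ ½ sup_α |(p̂ᴱ - p̂ᴼ)[(V)_α]|`. The layer-cake formula
`(V)_α = ∫₀ᴹ 1{t < min V α} dt`, `M = r_max / (1 - γ)`, bounds this by `∫₀ᴹ |H_t| dt` with
`H_t = (p̂ᴱ - p̂ᴼ)[1{t < V}]`, which is `2⁻ⁿ` times an alternating sum of the `2ⁿ⁺¹` terms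
`1{t < V(X_i)}`. Pairwise independence and Popoviciu's inequality give `E H_t² ≤ 2⁻ⁿ / 2`, and
Cauchy–Schwarz in `t` followed by Fubini gives `E δ² ≤ M² 2⁻ⁿ / 2`, well below the claimed bound. -/

lemma Finset.sum_Icc_two_mul {M : Type*} [AddCommMonoid M] (k : ℕ) (f : ℕ → M) :
    ∑ i ∈ Icc 1 (2 * k), f i = ∑ j ∈ Icc 1 k, (f (2 * j - 1) + f (2 * j)) := by
  induction k with
  | zero => simp
  | succ k ih =>
    rw [show 2 * (k + 1) = 2 * k + 1 + 1 by ring, sum_Icc_succ_top (by omega),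
      sum_Icc_succ_top (by omega), ih, sum_Icc_succ_top (by omega), add_assoc]
    rfl

lemma Finset.sum_Icc_two_mul_neg_one_pow_mul {R : Type*} [CommRing R] (k : ℕ) (f : ℕ → R) :
    ∑ i ∈ Icc 1 (2 * k), (-1) ^ i * f i = ∑ j ∈ Icc 1 k, (f (2 * j) - f (2 * j - 1)) := by
  rw [sum_Icc_two_mul]
  refine sum_congr rfl fun j hj => ?_
  have hodd : Odd (2 * j - 1) := ⟨j - 1, by grind⟩
  rw [hodd.neg_one_pow, pow_mul]
  ring

lemma abs_sum_sub_mul_le_two {S : Type*} [Fintype S] {q q' g : S → ℝ} (hq : IsPmf q)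
    (hq' : IsPmf q') (hg : ∀ s, |g s| ≤ 1) : |∑ s, (q s - q' s) * g s| ≤ 2 := by
  calc |∑ s, (q s - q' s) * g s| ≤ ∑ s, (q s + q' s) := by
        refine (abs_sum_le_sum_abs _ _).trans (sum_le_sum fun s _ => ?_)
        rw [abs_mul]
        refine (mul_le_of_le_one_right (abs_nonneg _) (hg s)).trans ?_
        exact abs_sub_le_iff.2 ⟨by linarith [hq'.1 s], by linarith [hq.1 s]⟩
    _ = 2 := by rw [sum_add_distrib, hq.2, hq'.2]; norm_num

section Empirical

variable {S : Type*} [Fintype S] [DecidableEq S] {Ω : Type*}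

lemma empPmf_eq_sum (X : ℕ → Ω → S) (k : ℕ) (ω : Ω) (s : S) :
    empPmf X k ω s = (∑ i ∈ Icc 1 k, if X i ω = s then 1 else 0) / k := by
  simp only [empPmf, sum_boole]

lemma empPmf_nonneg (X : ℕ → Ω → S) (k : ℕ) (ω : Ω) (s : S) : 0 ≤ empPmf X k ω s := by
  unfold empPmf
  positivity

lemma sum_empPmf_mul (X : ℕ → Ω → S) (k : ℕ) (ω : Ω) (g : S → ℝ) :
    ∑ s, empPmf X k ω s * g s = (∑ i ∈ Icc 1 k, g (X i ω)) / k := by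
  simp only [empPmf, card_filter, Nat.cast_sum, div_mul_eq_mul_div, ← sum_div, sum_mul]
  rw [sum_comm]
  simp

lemma sum_empPmf (X : ℕ → Ω → S) {k : ℕ} (hk : k ≠ 0) (ω : Ω) : ∑ s, empPmf X k ω s = 1 := by
  simpa [hk] using sum_empPmf_mul X k ω 1

lemma isPmf_empPmf (X : ℕ → Ω → S) {k : ℕ} (hk : k ≠ 0) (ω : Ω) : IsPmf (empPmf X k ω) :=
  ⟨empPmf_nonneg X k ω, sum_empPmf X hk ω⟩

lemma empPmf_two_mul (X : ℕ → Ω → S) (k : ℕ) (ω : Ω) (s : S) :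
    empPmf X (2 * k) ω s
      = (empPmf (fun i => X (2 * i)) k ω s + empPmf (fun i => X (2 * i - 1)) k ω s) / 2 := by
  simp only [empPmf_eq_sum, sum_Icc_two_mul, sum_add_distrib]
  push_cast
  rcases eq_or_ne k 0 with rfl | hk
  · simp
  field_simp
  ring

lemma sum_empPmf_sub_mul (X : ℕ → Ω → S) (k : ℕ) (ω : Ω) (g : S → ℝ) :
    ∑ s, (empPmf (fun i => X (2 * i)) k ω s - empPmf (fun i => X (2 * i - 1)) k ω s) * g s
      = (∑ i ∈ Icc 1 (2 * k), (-1) ^ i * g (X i ω)) / k := by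
  simp only [sub_mul, sum_sub_distrib, sum_empPmf_mul]
  rw [← sub_div, ← sum_sub_distrib, sum_Icc_two_mul_neg_one_pow_mul]

lemma measurable_empPmf [MeasurableSpace S] [MeasurableSingletonClass S] [MeasurableSpace Ω]
    {X : ℕ → Ω → S} (hX : ∀ i, Measurable (X i)) (k : ℕ) (s : S) :
    Measurable fun ω => empPmf X k ω s := by
  simp only [empPmf_eq_sum]
  exact (Finset.measurable_sum _ fun i _ =>
    (measurable_const.ite (hX i (measurableSet_singleton s)) measurable_const)).div_const _

end Empirical

section DualValue

variable {S : Type*} [Fintype S]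

noncomputable def tvObjective (σ : ℝ) (q V : S → ℝ) (α : ℝ) : ℝ :=
  (∑ s, q s * min (V s) α) - σ * (α - ⨅ s, V s)

lemma tvObjective_le_fstarTV {σ : ℝ} (hσ : 0 ≤ σ) {q : S → ℝ} (hq : ∀ s, 0 ≤ q s) (V : S → ℝ)
    {α : ℝ} (hα : 0 ≤ α) : tvObjective σ q V α ≤ fstarTV σ q V := by
  refine le_csSup ⟨(∑ s, q s * V s) + σ * ⨅ s, V s, ?_⟩ ⟨α, hα, rfl⟩
  rintro _ ⟨β, hβ, rfl⟩
  have hmin : ∑ s, q s * min (V s) β ≤ ∑ s, q s * V s :=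
    sum_le_sum fun s _ => mul_le_mul_of_nonneg_left (min_le_left _ _) (hq s)
  nlinarith [mul_nonneg hσ hβ]

lemma fstarTV_le {σ : ℝ} {q V : S → ℝ} {c : ℝ} (h : ∀ α, 0 ≤ α → tvObjective σ q V α ≤ c) :
    fstarTV σ q V ≤ c :=
  csSup_le ⟨_, 0, le_rfl, rfl⟩ fun _ ⟨α, hα, hx⟩ => hx ▸ h α hα

lemma tvObjective_sub_tvObjective (σ : ℝ) (q q' V : S → ℝ) (α : ℝ) :
    tvObjective σ q V α - tvObjective σ q' V α = ∑ s, (q s - q' s) * min (V s) α := by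
  simp only [tvObjective, sub_mul, sum_sub_distrib]
  ring

lemma abs_fstarTV_midpoint_sub_le {σ : ℝ} (hσ : 0 ≤ σ) {q qE qO : S → ℝ}
    (hE : ∀ s, 0 ≤ qE s) (hO : ∀ s, 0 ≤ qO s) (hmid : ∀ s, q s = (qE s + qO s) / 2)
    (V : S → ℝ) {B : ℝ} (hB : ∀ α, 0 ≤ α → |∑ s, (qE s - qO s) * min (V s) α| ≤ B) :
    |fstarTV σ q V - 1 / 2 * fstarTV σ qE V - 1 / 2 * fstarTV σ qO V| ≤ B / 2 := by
  have hq : ∀ s, 0 ≤ q s := fun s => by rw [hmid]; linarith [hE s, hO s]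
  have hobj : ∀ α, tvObjective σ q V α
      = (tvObjective σ qE V α + tvObjective σ qO V α) / 2 := fun α => by
    simp only [tvObjective, hmid, add_mul, sum_add_distrib, div_mul_eq_mul_div, ← sum_div]
    ring
  have hconv : fstarTV σ q V ≤ 1 / 2 * fstarTV σ qE V + 1 / 2 * fstarTV σ qO V :=
    fstarTV_le fun α hα => by
      rw [hobj]
      linarith [tvObjective_le_fstarTV hσ hE V hα, tvObjective_le_fstarTV hσ hO V hα]
  have hdiff : ∀ α, 0 ≤ α → |tvObjective σ qE V α - tvObjective σ qO V α| ≤ B :=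
    fun α hα => tvObjective_sub_tvObjective σ qE qO V α ▸ hB α hα
  have hE_le : fstarTV σ qE V ≤ fstarTV σ q V + B / 2 :=
    fstarTV_le fun α hα => by
      have := (abs_le.1 (hdiff α hα)).2
      linarith [tvObjective_le_fstarTV hσ hq V hα, hobj α]
  have hO_le : fstarTV σ qO V ≤ fstarTV σ q V + B / 2 :=
    fstarTV_le fun α hα => by
      have := (abs_le.1 (hdiff α hα)).1
      linarith [tvObjective_le_fstarTV hσ hq V hα, hobj α]
  rw [abs_le]
  constructor <;> linarith

end DualValue

section LayerCake

variable {S : Type*} [Fintype S]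

lemma ite_lt_eq_indicator (c : ℝ) :
    (fun t : ℝ => if t < c then (1 : ℝ) else 0) = (Set.Iio c).indicator 1 := by
  ext t
  simp [Set.indicator, Set.mem_Iio]

lemma integrableOn_ite_lt (c : ℝ) (s : Set ℝ) [IsFiniteMeasure (volume.restrict s)] :
    IntegrableOn (fun t => if t < c then (1 : ℝ) else 0) s :=
  ite_lt_eq_indicator c ▸ (integrable_const 1).indicator measurableSet_Iio

lemma setIntegral_Ioc_ite_lt {c M : ℝ} (hc : 0 ≤ c) (hcM : c ≤ M) :
    ∫ t in Set.Ioc 0 M, (if t < c then 1 else 0 : ℝ) = c := by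
  have hinter : Set.Iio c ∩ Set.Ioc 0 M = Set.Ioo 0 c := by
    ext t
    simp only [Set.mem_inter_iff, Set.mem_Iio, Set.mem_Ioc, Set.mem_Ioo]
    exact ⟨fun ⟨h1, h2, _⟩ => ⟨h2, h1⟩, fun ⟨h1, h2⟩ => ⟨h2, h1, by linarith⟩⟩
  rw [ite_lt_eq_indicator, integral_indicator_one measurableSet_Iio,
    measureReal_restrict_apply measurableSet_Iio, hinter, Real.volume_real_Ioo_of_le hc, sub_zero]

lemma integrableOn_sum_mul_ite_lt (w a : S → ℝ) (s : Set ℝ) [IsFiniteMeasure (volume.restrict s)] :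
    IntegrableOn (fun t => ∑ x, w x * if t < a x then 1 else 0) s :=
  integrable_finsetSum _ fun x _ => (integrableOn_ite_lt (a x) s).const_mul _

lemma sum_mul_eq_setIntegral_Ioc {M : ℝ} (w : S → ℝ) {a : S → ℝ} (ha : ∀ x, 0 ≤ a x ∧ a x ≤ M) :
    ∑ x, w x * a x = ∫ t in Set.Ioc 0 M, ∑ x, w x * if t < a x then 1 else 0 := by
  rw [integral_finsetSum _ fun x _ => (integrableOn_ite_lt (a x) _).const_mul _]
  exact sum_congr rfl fun x _ => by
    rw [integral_const_mul, setIntegral_Ioc_ite_lt (ha x).1 (ha x).2]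

lemma abs_sum_mul_min_le_setIntegral {M : ℝ} (w : S → ℝ) {V : S → ℝ}
    (hV : ∀ x, 0 ≤ V x ∧ V x ≤ M) {α : ℝ} (hα : 0 ≤ α) :
    |∑ x, w x * min (V x) α|
      ≤ ∫ t in Set.Ioc 0 M, |∑ x, w x * if t < V x then 1 else 0| := by
  have hmin : ∀ x, 0 ≤ min (V x) α ∧ min (V x) α ≤ M :=
    fun x => ⟨le_min (hV x).1 hα, (min_le_left _ _).trans (hV x).2⟩
  have htrunc : ∀ t, (∑ x, w x * if t < min (V x) α then 1 else 0)
      = (if t < α then 1 else 0) * ∑ x, w x * if t < V x then 1 else 0 := fun t => by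
    rw [mul_sum]
    refine sum_congr rfl fun x _ => ?_
    simp only [lt_min_iff]
    split_ifs <;> simp_all
  rw [sum_mul_eq_setIntegral_Ioc w hmin]
  refine (abs_integral_le_integral_abs).trans (integral_mono ?_ ?_ fun t => ?_)
  · exact (integrableOn_sum_mul_ite_lt w _ _).abs
  · exact (integrableOn_sum_mul_ite_lt w _ _).abs
  · rw [htrunc, abs_mul]
    exact mul_le_of_le_one_left (abs_nonneg _) (by split_ifs <;> simp)

end LayerCake

lemma sq_integral_abs_le_measureReal_mul {α : Type*} [MeasurableSpace α] (ν : Measure α)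
    [IsFiniteMeasure ν] {f : α → ℝ} (hf : MemLp f 2 ν) :
    (∫ x, |f x| ∂ν) ^ 2 ≤ ν.real Set.univ * ∫ x, f x ^ 2 ∂ν := by
  rcases eq_zero_or_neZero ν with rfl | hν
  · simp
  have hjensen := (convexOn_pow 2).map_average_le (continuous_pow 2).continuousOn isClosed_Ici
    (Filter.Eventually.of_forall fun x => abs_nonneg (f x)) (hf.integrable one_le_two).abs
    (by simpa only [Function.comp_def, sq_abs] using hf.integrable_sq)
  simp only [sq_abs, average_eq, smul_eq_mul, measureReal_def] at hjensen ⊢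
  have hm : 0 < (ν Set.univ).toReal := ENNReal.toReal_pos (NeZero.ne _) (measure_ne_top _ _)
  rw [mul_pow, ← div_le_iff₀' (by positivity)] at hjensen
  calc (∫ x, |f x| ∂ν) ^ 2
      = (ν Set.univ).toReal * ((ν Set.univ).toReal⁻¹ ^ 2 * (∫ x, |f x| ∂ν) ^ 2
          / (ν Set.univ).toReal⁻¹) := by field_simp
    _ ≤ (ν Set.univ).toReal * ∫ x, f x ^ 2 ∂ν := by gcongr

lemma integral_sq_le_of_abs_le_integral_abs {Ω α : Type*} [MeasurableSpace Ω] [MeasurableSpace α]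
    {μ : Measure Ω} [IsFiniteMeasure μ] {ν : Measure α} [IsFiniteMeasure ν] {H : Ω → α → ℝ}
    (hH : Measurable (Function.uncurry H)) {C : ℝ} (hC : ∀ ω t, |H ω t| ≤ C) {δ : Ω → ℝ}
    (hδ : ∀ ω, |δ ω| ≤ ∫ t, |H ω t| ∂ν) {c : ℝ} (hc : ∀ t, ∫ ω, H ω t ^ 2 ∂μ ≤ c) :
    ∫ ω, δ ω ^ 2 ∂μ ≤ ν.real Set.univ ^ 2 * c := by
  have hsq_bdd : ∀ ω t, ‖H ω t ^ 2‖ ≤ C ^ 2 := fun ω t => by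
    rw [Real.norm_eq_abs, abs_pow]
    exact pow_le_pow_left₀ (abs_nonneg _) (hC ω t) 2
  have hint : Integrable (Function.uncurry fun ω t => H ω t ^ 2) (μ.prod ν) :=
    Integrable.of_bound (hH.pow_const 2).aestronglyMeasurable (C ^ 2)
      (Filter.Eventually.of_forall fun x => hsq_bdd x.1 x.2)
  have hpt : ∀ ω, δ ω ^ 2 ≤ ν.real Set.univ * ∫ t, H ω t ^ 2 ∂ν := fun ω => by
    have hmem : MemLp (H ω) 2 ν := MemLp.of_bound
      (hH.comp (measurable_const.prodMk measurable_id)).aestronglyMeasurable C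
      (Filter.Eventually.of_forall fun t => (Real.norm_eq_abs _).trans_le (hC ω t))
    rw [← sq_abs]
    exact (pow_le_pow_left₀ (abs_nonneg _) (hδ ω) 2).trans
      (sq_integral_abs_le_measureReal_mul ν hmem)
  calc ∫ ω, δ ω ^ 2 ∂μ ≤ ∫ ω, ν.real Set.univ * ∫ t, H ω t ^ 2 ∂ν ∂μ :=
        integral_mono_of_nonneg (Filter.Eventually.of_forall fun ω => sq_nonneg _)
          (hint.integral_prod_left.const_mul _) (Filter.Eventually.of_forall hpt)
    _ = ν.real Set.univ * ∫ t, ∫ ω, H ω t ^ 2 ∂μ ∂ν := by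
        rw [integral_const_mul, integral_integral_swap hint]
    _ ≤ ν.real Set.univ * (ν.real Set.univ * c) := by
        gcongr
        simpa using integral_mono_of_nonneg
          (Filter.Eventually.of_forall fun t => integral_nonneg fun ω => sq_nonneg (H ω t))
          (integrable_const c) (Filter.Eventually.of_forall hc)
    _ = ν.real Set.univ ^ 2 * c := by ring

lemma pairwise_indepFun_of_iIndepFun_succ {Ω β : Type*} [MeasurableSpace Ω] [MeasurableSpace β]
    {μ : Measure Ω} {K : ℕ} {X : ℕ → Ω → β} (h : iIndepFun (fun i : Fin K => X (i + 1)) μ) :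
    Set.Pairwise ↑(Icc 1 K) fun i j => X i ⟂ᵢ[μ] X j := by
  intro i hi j hj hij
  simp only [coe_Icc, Set.mem_Icc] at hi hj
  have hij' : (⟨i - 1, by omega⟩ : Fin K) ≠ ⟨j - 1, by omega⟩ := by
    simp only [ne_eq, Fin.mk.injEq]
    omega
  simpa [Nat.sub_add_cancel hi.1, Nat.sub_add_cancel hj.1] using h.indepFun hij'

section Moments

variable {Ω : Type*} [MeasurableSpace Ω] {μ : Measure Ω} [IsProbabilityMeasure μ]

lemma integral_comp_eq_sum_of_law {S : Type*} [Fintype S] [MeasurableSpace S]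
    [MeasurableSingletonClass S] {Y : Ω → S} (hY : Measurable Y) {p : S → ℝ} (hp : ∀ s, 0 ≤ p s)
    (hlaw : ∀ s, μ (Y ⁻¹' {s}) = ENNReal.ofReal (p s)) (g : S → ℝ) :
    ∫ ω, g (Y ω) ∂μ = ∑ s, p s * g s := by
  rw [← integral_map hY.aemeasurable (measurable_of_finite g).aestronglyMeasurable,
    integral_fintype (Integrable.of_finite)]
  refine sum_congr rfl fun s _ => ?_
  rw [map_measureReal_apply hY (measurableSet_singleton s), measureReal_def, hlaw,
    ENNReal.toReal_ofReal (hp s), smul_eq_mul]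

lemma integral_sq_sum_eq_sum_variance {ι : Type*} {s : Finset ι} {Y : ι → Ω → ℝ}
    (hY : ∀ i ∈ s, MemLp (Y i) 2 μ) (hindep : Set.Pairwise ↑s fun i j => Y i ⟂ᵢ[μ] Y j)
    (hmean : ∑ i ∈ s, μ[Y i] = 0) :
    ∫ ω, (∑ i ∈ s, Y i ω) ^ 2 ∂μ = ∑ i ∈ s, Var[Y i; μ] := by
  have hsum : MemLp (∑ i ∈ s, Y i) 2 μ := memLp_finsetSum' s hY
  have hmean' : μ[∑ i ∈ s, Y i] = 0 := by
    rw [← hmean, ← integral_finsetSum s fun i hi => (hY i hi).integrable one_le_two]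
    simp only [Finset.sum_apply]
  rw [← IndepFun.variance_sum hY hindep, variance_eq_sub hsum, hmean']
  simp [Finset.sum_apply]

lemma integral_sq_sum_empPmf_sub_mul_le {S : Type*} [Fintype S] [DecidableEq S]
    [MeasurableSpace S] [MeasurableSingletonClass S] {X : ℕ → Ω → S} (hX : ∀ i, Measurable (X i))
    {k : ℕ} (hindep : Set.Pairwise ↑(Icc 1 (2 * k)) fun i j => X i ⟂ᵢ[μ] X j)
    {p : S → ℝ} (hp : ∀ s, 0 ≤ p s) (hlaw : ∀ i ∈ Icc 1 (2 * k), ∀ s, μ (X i ⁻¹' {s}) = ENNReal.ofReal (p s))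
    {g : S → ℝ} (hg : ∀ s, g s ∈ Set.Icc 0 1) :
    ∫ ω, (∑ s, (empPmf (fun i => X (2 * i)) k ω s - empPmf (fun i => X (2 * i - 1)) k ω s)
      * g s) ^ 2 ∂μ ≤ 1 / (2 * (k : ℝ)) := by
  set Y : ℕ → Ω → ℝ := fun i ω => (-1) ^ i * g (X i ω) with hYdef
  have hgX : ∀ i, Measurable fun ω => g (X i ω) := fun i => (measurable_of_finite g).comp (hX i)
  have hYmem : ∀ i, MemLp (Y i) 2 μ := fun i =>
    MemLp.of_bound ((hgX i).const_mul _).aestronglyMeasurable 1 (Filter.Eventually.of_forall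
      fun ω => by simp [Y, abs_of_nonneg (hg _).1, (hg _).2])
  have hYindep : Set.Pairwise ↑(Icc 1 (2 * k)) fun i j => Y i ⟂ᵢ[μ] Y j :=
    fun i hi j hj hij => (hindep hi hj hij).comp (measurable_of_finite fun x => (-1) ^ i * g x)
      (measurable_of_finite fun x => (-1) ^ j * g x)
  have hYvar : ∀ i, Var[Y i; μ] ≤ 1 / 4 := fun i => by
    rw [hYdef, variance_const_mul, ← pow_mul, pow_mul', neg_one_sq, one_pow, one_mul]
    exact (variance_le_sq_of_bounded (μ := μ) (Filter.Eventually.of_forall fun ω => hg (X i ω))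
      (hgX i).aemeasurable).trans_eq (by norm_num)
  have hYmean : ∑ i ∈ Icc 1 (2 * k), μ[Y i] = 0 := by
    have hmean : ∀ i ∈ Icc 1 (2 * k), μ[fun ω => g (X i ω)] = ∑ s, p s * g s :=
      fun i hi => integral_comp_eq_sum_of_law (hX i) hp (hlaw i hi) g
    simp only [hYdef, integral_const_mul]
    rw [sum_congr rfl fun i hi => by rw [hmean i hi], sum_Icc_two_mul_neg_one_pow_mul]
    simp
  simp_rw [sum_empPmf_sub_mul, div_pow, integral_div]
  rw [integral_sq_sum_eq_sum_variance (fun i _ => hYmem i) hYindep hYmean]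
  have hvar_sum : ∑ i ∈ Icc 1 (2 * k), Var[Y i; μ] ≤ 2 * k * (1 / 4) := by
    simpa using sum_le_sum fun i (_ : i ∈ Icc 1 (2 * k)) => hYvar i
  calc (∑ i ∈ Icc 1 (2 * k), Var[Y i; μ]) / (k : ℝ) ^ 2 ≤ 2 * k * (1 / 4) / (k : ℝ) ^ 2 := by
        gcongr
    _ ≤ 1 / (2 * (k : ℝ)) := by
        rcases eq_or_ne (k : ℝ) 0 with hk | hk
        · simp [hk]
        · field_simp
          norm_num

end Moments

theorem mlmc_increment_second_moment_tv_general
    {S : Type*} [Fintype S] [Nonempty S] [DecidableEq S]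
    [MeasurableSpace S] [MeasurableSingletonClass S]
    {Ω : Type*} [MeasurableSpace Ω] (μ : Measure Ω) [IsProbabilityMeasure μ]
    (p : S → ℝ) (hp : IsPmf p)
    (σ : ℝ) (hσ : 0 ≤ σ)
    (rmax : ℝ)
    (γ : ℝ)
    (V : S → ℝ) (hV : ∀ s, 0 ≤ V s ∧ V s ≤ rmax / (1 - γ))
    (n : ℕ)
    (X : ℕ → Ω → S) (hXmeas : ∀ i, Measurable (X i))
    (hXindep : iIndepFun
        (fun i : Fin (2 ^ (n + 1)) => X (i + 1)) μ)
    (hXlaw : ∀ i ∈ Finset.Icc 1 (2 ^ (n + 1)), ∀ s, μ (X i ⁻¹' {s}) = ENNReal.ofReal (p s)) :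
    (∫ ω, (fstarTV σ (empPmf X (2 ^ (n + 1)) ω) V
        - (1 / 2) * fstarTV σ (empPmf (fun i => X (2 * i)) (2 ^ n) ω) V
        - (1 / 2) * fstarTV σ (empPmf (fun i => X (2 * i - 1)) (2 ^ n) ω) V) ^ 2 ∂μ)
      ≤ 3 * ((3 * Real.sqrt ((2 * n + 1) * Real.log 2 + Real.log 18)) ^ 2 + 1)
          * (rmax / (1 - γ)) ^ 2 * (2 : ℝ) ^ (-(n : ℝ)) := by
  set M := rmax / (1 - γ)
  have hM : 0 ≤ M := let ⟨s⟩ := ‹Nonempty S›; (hV s).1.trans (hV s).2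
  have hk : 2 ^ n ≠ 0 := pow_ne_zero n two_ne_zero
  have hpair := pairwise_indepFun_of_iIndepFun_succ hXindep
  rw [pow_succ'] at hpair hXlaw ⊢
  set H : Ω → ℝ → ℝ := fun ω t => ∑ s, (empPmf (fun i => X (2 * i)) (2 ^ n) ω s
    - empPmf (fun i => X (2 * i - 1)) (2 ^ n) ω s) * if t < V s then 1 else 0
  have hHmeas : Measurable (Function.uncurry H) :=
    Finset.measurable_sum _ fun s _ =>
      (((measurable_empPmf (fun i => hXmeas _) _ s).sub
        (measurable_empPmf (fun i => hXmeas _) _ s)).comp measurable_fst).mul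
      (Measurable.ite (measurableSet_lt measurable_snd measurable_const) measurable_const
        measurable_const)
  have hHbdd : ∀ ω t, |H ω t| ≤ 2 := fun ω t =>
    abs_sum_sub_mul_le_two (isPmf_empPmf _ hk ω) (isPmf_empPmf _ hk ω)
      fun s => by split_ifs <;> simp
  have hδ : ∀ ω, |fstarTV σ (empPmf X (2 * 2 ^ n) ω) V
      - 1 / 2 * fstarTV σ (empPmf (fun i => X (2 * i)) (2 ^ n) ω) V
      - 1 / 2 * fstarTV σ (empPmf (fun i => X (2 * i - 1)) (2 ^ n) ω) V|
      ≤ ∫ t in Set.Ioc 0 M, |H ω t| := fun ω =>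
    (abs_fstarTV_midpoint_sub_le hσ (empPmf_nonneg _ _ ω) (empPmf_nonneg _ _ ω)
      (empPmf_two_mul X _ ω) V fun α hα => abs_sum_mul_min_le_setIntegral _ hV hα).trans
      (half_le_self (integral_nonneg fun t => abs_nonneg _))
  have hH2 : ∀ t, ∫ ω, H ω t ^ 2 ∂μ ≤ 1 / (2 * (2 ^ n : ℕ)) := fun t =>
    integral_sq_sum_empPmf_sub_mul_le hXmeas hpair hp.1 hXlaw fun s => by split_ifs <;> simp
  calc _ ≤ (volume.restrict (Set.Ioc 0 M)).real Set.univ ^ 2 * (1 / (2 * (2 ^ n : ℕ))) :=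
        integral_sq_le_of_abs_le_integral_abs hHmeas hHbdd hδ hH2
    _ = 1 / 2 * M ^ 2 * (2 : ℝ) ^ (-(n : ℝ)) := by
        rw [measureReal_restrict_apply_univ, Real.volume_real_Ioc_of_le hM,
          Real.rpow_neg zero_le_two, Real.rpow_natCast]
        push_cast
        ring
    _ ≤ _ := by
        gcongr
        nlinarith [sq_nonneg (3 * Real.sqrt ((2 * n + 1) * Real.log 2 + Real.log 18))]

/-- Second-moment bound on the multi-level Monte Carlo increment
(total-variation case). -/
theorem mlmc_increment_second_moment_tv
    {S : Type*} [Fintype S] [Nonempty S] [DecidableEq S]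
    [MeasurableSpace S] [MeasurableSingletonClass S]
    {Ω : Type*} [MeasurableSpace Ω] (μ : Measure Ω) [IsProbabilityMeasure μ]
    (p : S → ℝ) (hp : IsPmf p)
    (σ : ℝ) (hσ : 0 ≤ σ)
    (rmax : ℝ) (hrmax : 0 < rmax)
    (γ : ℝ) (hγ0 : 0 ≤ γ) (hγ1 : γ < 1)
    (V : S → ℝ) (hV : ∀ s, 0 ≤ V s ∧ V s ≤ rmax / (1 - γ))
    (n : ℕ)
    (hn : (2 * n + 1) * Real.log 2 + Real.log 18 ≤ (2 : ℝ) ^ n)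
    (X : ℕ → Ω → S) (hXmeas : ∀ i, Measurable (X i))
    (hXindep : iIndepFun
        (fun i : Fin (2 ^ (n + 1)) => X (i + 1)) μ)
    (hXlaw : ∀ i ∈ Finset.Icc 1 (2 ^ (n + 1)), ∀ s, μ (X i ⁻¹' {s}) = ENNReal.ofReal (p s)) :
    (∫ ω, (fstarTV σ (empPmf X (2 ^ (n + 1)) ω) V
        - (1 / 2) * fstarTV σ (empPmf (fun i => X (2 * i)) (2 ^ n) ω) V
        - (1 / 2) * fstarTV σ (empPmf (fun i => X (2 * i - 1)) (2 ^ n) ω) V) ^ 2 ∂μ)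
      ≤ 3 * ((3 * Real.sqrt ((2 * n + 1) * Real.log 2 + Real.log 18)) ^ 2 + 1)
          * (rmax / (1 - γ)) ^ 2 * (2 : ℝ) ^ (-(n : ℝ)) :=
  mlmc_increment_second_moment_tv_general μ p hp σ hσ rmax γ V hV n X hXmeas hXindep hXlaw
end
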